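/- arXiv:2408.00457 — 5 statements merged into one kernel-verified Lean document; each statement's English description precedes it below -/
import Mathlib

section
/- Let G be an edge-ordered graph whose minimal edge e0 is not isolated. Then every n-vertex graph H that sat_m-saturates G has at least n/2 - 1 edges; in particular sat_m(n,G) = Ω(n). -/
open SimpleGraph

/-- `f` is a copy of the edge-ordered graph `(G, lG)` inside `(H, lH)`,
i.e. an injective graph homomorphism respecting the edge-order. -/
def IsEOCopy {W V : Type} (G : SimpleGraph W) (lG : Sym2 W → ℝ)
    (H : SimpleGraph V) (lH : Sym2 V → ℝ) (f : W → V) : Prop :=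
  Function.Injective f ∧
  (∀ u v : W, G.Adj u v → H.Adj (f u) (f v)) ∧
  ∀ e₁ ∈ G.edgeSet, ∀ e₂ ∈ G.edgeSet,
    (lG e₁ < lG e₂ ↔ lH (Sym2.map f e₁) < lH (Sym2.map f e₂))

/-- `(H, lH)` contains a copy of the edge-ordered graph `(G, lG)`. -/
def EOContains {V W : Type} (H : SimpleGraph V) (lH : Sym2 V → ℝ)
    (G : SimpleGraph W) (lG : Sym2 W → ℝ) : Prop :=
  ∃ f : W → V, IsEOCopy G lG H lH f

/-- `(H, lH)` contains a copy of `(G, lG)` that uses the edge `e₀`. -/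
def EOContainsVia {V W : Type} (H : SimpleGraph V) (lH : Sym2 V → ℝ)
    (G : SimpleGraph W) (lG : Sym2 W → ℝ) (e₀ : Sym2 V) : Prop :=
  ∃ f : W → V, IsEOCopy G lG H lH f ∧ ∃ e ∈ G.edgeSet, Sym2.map f e = e₀

/-- `H` sat_m-saturates `G`: `H` avoids `G`, and adding any new edge with a label
smaller than all labels of `H` creates a copy of `G`. -/
def SatMSat {V W : Type} [DecidableEq V] (H : SimpleGraph V) (lH : Sym2 V → ℝ)
    (G : SimpleGraph W) (lG : Sym2 W → ℝ) : Prop :=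
  ¬ EOContains H lH G lG ∧
  ∀ u v : V, u ≠ v → ¬ H.Adj u v → ∀ t : ℝ, (∀ e ∈ H.edgeSet, t < lH e) →
    EOContains (H ⊔ fromEdgeSet {s(u, v)})
      (fun e => if e = s(u, v) then t else lH e) G lG

/-- `H` ssat_m-semisaturates `G`: adding any new edge with a label smaller than all
labels of `H` creates a new copy of `G` (a copy using the new edge). -/
def SsatMSat {V W : Type} [DecidableEq V] (H : SimpleGraph V) (lH : Sym2 V → ℝ)
    (G : SimpleGraph W) (lG : Sym2 W → ℝ) : Prop :=
  ∀ u v : V, u ≠ v → ¬ H.Adj u v → ∀ t : ℝ, (∀ e ∈ H.edgeSet, t < lH e) →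
    EOContainsVia (H ⊔ fromEdgeSet {s(u, v)})
      (fun e => if e = s(u, v) then t else lH e) G lG s(u, v)

/-- `H` sat_e-saturates `G`: `H` avoids `G`, and adding any new edge with any new label
(inserted anywhere in the linear order of edges) creates a copy of `G`. -/
def SatESat {V W : Type} [DecidableEq V] (H : SimpleGraph V) (lH : Sym2 V → ℝ)
    (G : SimpleGraph W) (lG : Sym2 W → ℝ) : Prop :=
  ¬ EOContains H lH G lG ∧
  ∀ u v : V, u ≠ v → ¬ H.Adj u v → ∀ t : ℝ, (∀ e ∈ H.edgeSet, t ≠ lH e) →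
    EOContains (H ⊔ fromEdgeSet {s(u, v)})
      (fun e => if e = s(u, v) then t else lH e) G lG

/-- `H` ssat_e-semisaturates `G`: adding any new edge with any new label creates a
new copy of `G`. -/
def SsatESat {V W : Type} [DecidableEq V] (H : SimpleGraph V) (lH : Sym2 V → ℝ)
    (G : SimpleGraph W) (lG : Sym2 W → ℝ) : Prop :=
  ∀ u v : V, u ≠ v → ¬ H.Adj u v → ∀ t : ℝ, (∀ e ∈ H.edgeSet, t ≠ lH e) →
    EOContainsVia (H ⊔ fromEdgeSet {s(u, v)})
      (fun e => if e = s(u, v) then t else lH e) G lG s(u, v)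

/-- `H` ssat_s-semisaturates `G`: any new edge can be added with some new label so
that a new copy of `G` is created. -/
def SsatSSat {V W : Type} [DecidableEq V] (H : SimpleGraph V) (lH : Sym2 V → ℝ)
    (G : SimpleGraph W) (lG : Sym2 W → ℝ) : Prop :=
  ∀ u v : V, u ≠ v → ¬ H.Adj u v → ∃ t : ℝ, (∀ e ∈ H.edgeSet, t ≠ lH e) ∧
    EOContainsVia (H ⊔ fromEdgeSet {s(u, v)})
      (fun e => if e = s(u, v) then t else lH e) G lG s(u, v)

/-- `sat_m(n, G)`: minimum number of edges of an `n`-vertex sat_m-saturating graph. -/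
noncomputable def satM {W : Type} (G : SimpleGraph W) (lG : Sym2 W → ℝ) (n : ℕ) : ℕ :=
  sInf {m | ∃ (H : SimpleGraph (Fin n)) (lH : Sym2 (Fin n) → ℝ),
    Set.InjOn lH H.edgeSet ∧ SatMSat H lH G lG ∧ H.edgeSet.ncard = m}

/-- `ssat_m(n, G)`: minimum number of edges of an `n`-vertex ssat_m-semisaturating graph. -/
noncomputable def ssatM {W : Type} (G : SimpleGraph W) (lG : Sym2 W → ℝ) (n : ℕ) : ℕ :=
  sInf {m | ∃ (H : SimpleGraph (Fin n)) (lH : Sym2 (Fin n) → ℝ),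
    Set.InjOn lH H.edgeSet ∧ SsatMSat H lH G lG ∧ H.edgeSet.ncard = m}

/-- `sat_e(n, G)`: minimum number of edges of an `n`-vertex sat_e-saturating graph. -/
noncomputable def satE {W : Type} (G : SimpleGraph W) (lG : Sym2 W → ℝ) (n : ℕ) : ℕ :=
  sInf {m | ∃ (H : SimpleGraph (Fin n)) (lH : Sym2 (Fin n) → ℝ),
    Set.InjOn lH H.edgeSet ∧ SatESat H lH G lG ∧ H.edgeSet.ncard = m}

/-- `ssat_e(n, G)`: minimum number of edges of an `n`-vertex ssat_e-semisaturating graph. -/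
noncomputable def ssatE {W : Type} (G : SimpleGraph W) (lG : Sym2 W → ℝ) (n : ℕ) : ℕ :=
  sInf {m | ∃ (H : SimpleGraph (Fin n)) (lH : Sym2 (Fin n) → ℝ),
    Set.InjOn lH H.edgeSet ∧ SsatESat H lH G lG ∧ H.edgeSet.ncard = m}

/-- `ssat_s(n, G)`: minimum number of edges of an `n`-vertex ssat_s-semisaturating graph. -/
noncomputable def ssatS {W : Type} (G : SimpleGraph W) (lG : Sym2 W → ℝ) (n : ℕ) : ℕ :=
  sInf {m | ∃ (H : SimpleGraph (Fin n)) (lH : Sym2 (Fin n) → ℝ),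
    Set.InjOn lH H.edgeSet ∧ SsatSSat H lH G lG ∧ H.edgeSet.ncard = m}


section Aux

lemma edgeSet_add {V : Type} [DecidableEq V] (H : SimpleGraph V) {u v : V} (huv : u ≠ v) :
    (H ⊔ fromEdgeSet {s(u, v)}).edgeSet = insert s(u, v) H.edgeSet := by
  rw [edgeSet_sup, edgeSet_fromEdgeSet]
  ext e
  simp only [Set.mem_union, Set.mem_diff, Set.mem_singleton_iff, Set.mem_insert_iff,
    Set.mem_setOf_eq]
  constructor
  · rintro (h | ⟨rfl, -⟩)
    · exact Or.inr h
    · exact Or.inl rfl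
  · rintro (rfl | h)
    · exact Or.inr ⟨rfl, fun hd => huv (Sym2.mk_isDiag_iff.mp hd)⟩
    · exact Or.inl h

lemma support_ncard_le {n : ℕ} (H : SimpleGraph (Fin n)) :
    H.support.ncard ≤ 2 * H.edgeSet.ncard := by
  classical
  set f : Fin n → Sym2 (Fin n) := fun v =>
    if h : ∃ w, H.Adj v w then s(v, h.choose) else s(v, v) with hf
  have hfv : ∀ v ∈ H.support, f v ∈ H.edgeSet ∧ v ∈ f v := by
    intro v hv
    rw [SimpleGraph.mem_support] at hv
    simp only [hf, dif_pos hv]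
    exact ⟨(SimpleGraph.mem_edgeSet _).mpr hv.choose_spec, Sym2.mem_mk_left _ _⟩
  set s : Finset (Fin n) := (Set.toFinite H.support).toFinset with hs
  have hcard1 : H.support.ncard = s.card := Set.ncard_eq_toFinset_card _ _
  have hmain : s.card ≤ 2 * (s.image f).card := by
    refine Finset.card_le_mul_card_image s 2 ?_
    intro aa ha
    induction aa using Sym2.ind with
    | _ x y =>
      have hsub : (s.filter fun v => f v = s(x, y)) ⊆ {x, y} := by
        intro w hw
        simp only [Finset.mem_filter] at hw
        have hmem := (hfv w ((Set.Finite.mem_toFinset _).mp hw.1)).2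
        rw [hw.2] at hmem
        simpa [Finset.mem_insert, Finset.mem_singleton] using Sym2.mem_iff.mp hmem
      calc (s.filter fun v => f v = s(x, y)).card ≤ ({x, y} : Finset (Fin n)).card :=
            Finset.card_le_card hsub
        _ ≤ 2 := Finset.card_insert_le x {y}
  have himg : s.image f ⊆ (Set.toFinite H.edgeSet).toFinset := by
    intro e he
    obtain ⟨w, hw, rfl⟩ := Finset.mem_image.mp he
    exact (Set.Finite.mem_toFinset _).mpr (hfv w ((Set.Finite.mem_toFinset _).mp hw)).1
  have hcard2 : (s.image f).card ≤ H.edgeSet.ncard := by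
    rw [Set.ncard_eq_toFinset_card _ (Set.toFinite H.edgeSet)]
    exact Finset.card_le_card himg
  omega

lemma key_nonsupport {W : Type} {G : SimpleGraph W} {lG : Sym2 W → ℝ}
    {a b : W} (hab : G.Adj a b)
    (hmin : ∀ e ∈ G.edgeSet, e ≠ s(a, b) → lG s(a, b) < lG e)
    (hniso : ∃ c : W, (G.Adj a c ∧ c ≠ b) ∨ (G.Adj b c ∧ c ≠ a))
    {n : ℕ} {H : SimpleGraph (Fin n)} {lH : Sym2 (Fin n) → ℝ}
    (hsat : SatMSat H lH G lG) {u v : Fin n}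
    (hu : u ∉ H.support) (hv : v ∉ H.support) : u = v := by
  by_contra huv
  have hadj : ¬ H.Adj u v := fun h => hu ((SimpleGraph.mem_support _).mpr ⟨v, h⟩)
  set t : ℝ := sInf (lH '' H.edgeSet) - 1 with hts
  have ht : ∀ e ∈ H.edgeSet, t < lH e := by
    intro e he
    have hb : BddBelow (lH '' H.edgeSet) := ((Set.toFinite H.edgeSet).image lH).bddBelow
    have := csInf_le hb (Set.mem_image_of_mem lH he)
    simp only [hts]; linarith
  obtain ⟨f, hfinj, hhom, hord⟩ := hsat.2 u v huv hadj t ht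
  have imE : ∀ e ∈ G.edgeSet, Sym2.map f e = s(u, v) ∨ Sym2.map f e ∈ H.edgeSet := by
    intro e he
    induction e using Sym2.ind with
    | _ x y =>
      have hx : (H ⊔ fromEdgeSet {s(u, v)}).Adj (f x) (f y) :=
        hhom x y ((SimpleGraph.mem_edgeSet _).mp he)
      have hmem : s(f x, f y) ∈ (H ⊔ fromEdgeSet {s(u, v)}).edgeSet :=
        (SimpleGraph.mem_edgeSet _).mpr hx
      rw [edgeSet_add H huv] at hmem
      simpa [Sym2.map_pair_eq] using hmem
  have hnew : ∃ e ∈ G.edgeSet, Sym2.map f e = s(u, v) := by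
    by_contra hcon
    push_neg at hcon
    refine hsat.1 ⟨f, hfinj, ?_, ?_⟩
    · intro x y hxy
      rcases imE s(x, y) ((SimpleGraph.mem_edgeSet _).mpr hxy) with h1 | h1
      · exact absurd h1 (hcon _ ((SimpleGraph.mem_edgeSet _).mpr hxy))
      · rw [Sym2.map_pair_eq] at h1
        exact (SimpleGraph.mem_edgeSet _).mp h1
    · intro e1 he1 e2 he2
      rw [hord e1 he1 e2 he2]
      simp only [if_neg (hcon e1 he1), if_neg (hcon e2 he2)]
  obtain ⟨e, heG, hemap⟩ := hnew
  have hmapinj : Function.Injective (Sym2.map f) := Sym2.map.injective hfinj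
  have hab' : s(a, b) ∈ G.edgeSet := (SimpleGraph.mem_edgeSet _).mpr hab
  have heab : e = s(a, b) := by
    by_contra hne
    have h1 : lG s(a, b) < lG e := hmin e heG hne
    have h2 := (hord _ hab' _ heG).mp h1
    simp only at h2
    have h3 : Sym2.map f s(a, b) ≠ s(u, v) := by
      intro h
      exact hne (hmapinj (hemap.trans h.symm))
    have h4 : Sym2.map f s(a, b) ∈ H.edgeSet := by
      rcases imE _ hab' with h | h
      · exact absurd h h3
      · exact h
    rw [if_neg h3, hemap, if_pos rfl] at h2
    exact absurd h2 (not_lt.mpr (le_of_lt (ht _ h4)))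
  subst heab
  rw [Sym2.map_pair_eq] at hemap
  have hfab : (f a = u ∨ f a = v) ∧ (f b = u ∨ f b = v) := by
    rcases Sym2.eq_iff.mp hemap with ⟨h1, h2⟩ | ⟨h1, h2⟩ <;> tauto
  obtain ⟨c, ⟨hac, hcb⟩ | ⟨hbc, hca⟩⟩ := hniso
  · have h5 : s(f a, f c) ∈ H.edgeSet := by
      rcases imE s(a, c) ((SimpleGraph.mem_edgeSet _).mpr hac) with h | h
      · exfalso
        rw [Sym2.map_pair_eq, ← hemap] at h
        rcases Sym2.eq_iff.mp h with ⟨-, h2⟩ | ⟨h1, h2⟩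
        · exact hcb (hfinj h2)
        · exact hab.ne (hfinj h1)
      · rwa [Sym2.map_pair_eq] at h
    have hmem : f a ∈ H.support :=
      (SimpleGraph.mem_support _).mpr ⟨f c, (SimpleGraph.mem_edgeSet _).mp h5⟩
    rcases hfab.1 with h | h
    · exact hu (h ▸ hmem)
    · exact hv (h ▸ hmem)
  · have h5 : s(f b, f c) ∈ H.edgeSet := by
      rcases imE s(b, c) ((SimpleGraph.mem_edgeSet _).mpr hbc) with h | h
      · exfalso
        rw [Sym2.map_pair_eq, ← hemap] at h
        rcases Sym2.eq_iff.mp h with ⟨h1, -⟩ | ⟨-, h2⟩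
        · exact hab.ne (hfinj h1).symm
        · exact hca (hfinj h2)
      · rwa [Sym2.map_pair_eq] at h
    have hmem : f b ∈ H.support :=
      (SimpleGraph.mem_support _).mpr ⟨f c, (SimpleGraph.mem_edgeSet _).mp h5⟩
    rcases hfab.2 with h | h
    · exact hu (h ▸ hmem)
    · exact hv (h ▸ hmem)

lemma bound_lemma {W : Type} {G : SimpleGraph W} {lG : Sym2 W → ℝ}
    {a b : W} (hab : G.Adj a b)
    (hmin : ∀ e ∈ G.edgeSet, e ≠ s(a, b) → lG s(a, b) < lG e)
    (hniso : ∃ c : W, (G.Adj a c ∧ c ≠ b) ∨ (G.Adj b c ∧ c ≠ a))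
    {n : ℕ} {H : SimpleGraph (Fin n)} {lH : Sym2 (Fin n) → ℝ}
    (hsat : SatMSat H lH G lG) :
    (n : ℝ) / 2 - 1 ≤ (H.edgeSet.ncard : ℝ) := by
  have h1 : H.supportᶜ.ncard ≤ 1 := by
    rw [Set.ncard_le_one (Set.toFinite _)]
    intro x hx y hy
    exact key_nonsupport hab hmin hniso hsat hx hy
  have h2 := Set.ncard_add_ncard_compl H.support (Set.toFinite _) (Set.toFinite _)
  have h3 := support_ncard_le H
  have hn : H.support.ncard + H.supportᶜ.ncard = n := by
    rw [h2, Nat.card_eq_fintype_card, Fintype.card_fin]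
  have hfin : n ≤ 2 * H.edgeSet.ncard + 1 := by omega
  have hfinR : (n : ℝ) ≤ 2 * (H.edgeSet.ncard : ℝ) + 1 := by exact_mod_cast hfin
  linarith

lemma exists_satM {W : Type} (G : SimpleGraph W) (lG : Sym2 W → ℝ)
    {a b : W} (hab : G.Adj a b) (n : ℕ) :
    ∃ (H : SimpleGraph (Fin n)) (lH : Sym2 (Fin n) → ℝ),
      Set.InjOn lH H.edgeSet ∧ SatMSat H lH G lG := by
  classical
  set M : Set ℕ := {m | ∃ (H : SimpleGraph (Fin n)) (lH : Sym2 (Fin n) → ℝ),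
      Set.InjOn lH H.edgeSet ∧ ¬ EOContains H lH G lG ∧ H.edgeSet.ncard = m} with hM
  have h0 : 0 ∈ M := by
    refine ⟨⊥, fun _ => 0, ?_, ?_, by simp⟩
    · rw [edgeSet_bot]; exact fun x hx => absurd hx (Set.notMem_empty x)
    · rintro ⟨f, -, hhom, -⟩
      simpa using hhom a b hab
  have hbdd : BddAbove M := by
    refine ⟨Fintype.card (Sym2 (Fin n)), ?_⟩
    rintro m ⟨H, lH, -, -, rfl⟩
    have := Set.ncard_le_ncard (Set.subset_univ H.edgeSet) (Set.toFinite _)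
    rwa [Set.ncard_univ, Nat.card_eq_fintype_card] at this
  obtain ⟨H, lH, hInj, hfree, hcard⟩ := Nat.sSup_mem ⟨0, h0⟩ hbdd
  refine ⟨H, lH, hInj, hfree, ?_⟩
  intro u v huv hadj t ht
  by_contra hcon
  have hne : (s(u, v) : Sym2 (Fin n)) ∉ H.edgeSet := fun h => hadj ((SimpleGraph.mem_edgeSet _).mp h)
  have hmem : H.edgeSet.ncard + 1 ∈ M := by
    refine ⟨H ⊔ fromEdgeSet {s(u, v)}, fun e => if e = s(u, v) then t else lH e, ?_, hcon, ?_⟩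
    · rw [edgeSet_add H huv]
      intro e1 he1 e2 he2 h12
      simp only at h12
      rcases he1 with rfl | he1 <;> rcases he2 with rfl | he2
      · rfl
      · exfalso
        rw [if_pos rfl, if_neg (by rintro rfl; exact hne he2)] at h12
        exact absurd h12 (ne_of_lt (ht _ he2))
      · exfalso
        rw [if_neg (by rintro rfl; exact hne he1), if_pos rfl] at h12
        exact absurd h12.symm (ne_of_lt (ht _ he1))
      · refine hInj he1 he2 ?_
        rwa [if_neg (by rintro rfl; exact hne he1),
          if_neg (by rintro rfl; exact hne he2)] at h12
    · rw [edgeSet_add H huv, Set.ncard_insert_of_notMem hne (Set.toFinite _)]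
  have hle := le_csSup hbdd hmem
  rw [hcard] at hle
  omega

end Aux

/-- if the minimal edge of `G` is not isolated, then every `n`-vertex
sat_m-saturating graph has at least `n/2 - 1` edges; in particular `sat_m(n,G) = Ω(n)`. -/
theorem stmt0 {W : Type} (G : SimpleGraph W) (lG : Sym2 W → ℝ)
    (hinj : Set.InjOn lG G.edgeSet) (a b : W) (hab : G.Adj a b)
    (hmin : ∀ e ∈ G.edgeSet, e ≠ s(a, b) → lG s(a, b) < lG e)
    (hniso : ∃ c : W, (G.Adj a c ∧ c ≠ b) ∨ (G.Adj b c ∧ c ≠ a)) :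
    (∀ (n : ℕ) (H : SimpleGraph (Fin n)) (lH : Sym2 (Fin n) → ℝ),
        Set.InjOn lH H.edgeSet → SatMSat H lH G lG →
        (n : ℝ) / 2 - 1 ≤ (H.edgeSet.ncard : ℝ)) ∧
    (∃ c : ℝ, 0 < c ∧ ∃ N : ℕ, ∀ n ≥ N, c * n ≤ (satM G lG n : ℝ)) := by
  constructor
  · intro n H lH hInjH hsat
    exact bound_lemma hab hmin hniso hsat
  · refine ⟨1/4, by norm_num, 4, fun n hn => ?_⟩
    obtain ⟨H0, lH0, hI0, hs0⟩ := exists_satM G lG hab n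
    have hmem : satM G lG n ∈ {m | ∃ (H : SimpleGraph (Fin n)) (lH : Sym2 (Fin n) → ℝ),
        Set.InjOn lH H.edgeSet ∧ SatMSat H lH G lG ∧ H.edgeSet.ncard = m} :=
      Nat.sInf_mem ⟨H0.edgeSet.ncard, H0, lH0, hI0, hs0, rfl⟩
    obtain ⟨H1, lH1, hI1, hs1, hc1⟩ := hmem
    have hb := bound_lemma hab hmin hniso hs1
    rw [hc1] at hb
    have hn4 : (4 : ℝ) ≤ (n : ℝ) := by exact_mod_cast hn
    linarith
end

section
/- Let G be a graph on n vertices with degrees d_1,…,d_n. Then the capacity of any bipartite covering of G (the sum over the covering bipartite graphs of their numbers of vertices) is at least Σ_{i=1}^n (log₂ n − log₂ (n − d_i)). -/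
open SimpleGraph

open Finset in
lemma ks_count {ι : Type} [Fintype ι] [DecidableEq ι] (T : Finset ι) (g : ι → Fin 2) :
    (Finset.univ.filter (fun ε : ι → Fin 2 => ∀ i ∈ T, ε i = g i)).card
      = 2 ^ (Fintype.card ι - T.card) := by
  classical
  rw [← Fintype.card_subtype]
  rw [Fintype.card_congr (Equiv.subtypePiEquivPi (p := fun i (a : Fin 2) => i ∈ T → a = g i))]
  rw [Fintype.card_pi]
  have h : ∀ i : ι, Fintype.card {a : Fin 2 // i ∈ T → a = g i}
      = if i ∈ T then 1 else 2 := by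
    intro i
    by_cases h : i ∈ T <;> simp [h, Fintype.card_subtype_eq, Fintype.card_subtype]
  rw [Finset.prod_congr rfl (fun i _ => h i)]
  rw [← Finset.prod_mul_prod_compl T]
  rw [Finset.prod_eq_one (fun i hi => if_pos hi), one_mul,
    Finset.prod_congr rfl (fun i hi => if_neg (Finset.mem_compl.mp hi)),
    Finset.prod_const, Finset.card_compl]

/-- Katona–Szemerédi: the capacity of any bipartite covering of a graph `G`
on `n` vertices with degrees `d₁, …, d_n` is at least `Σᵢ (log₂ n - log₂ (n - dᵢ))`. -/
theorem stmt6 {V : Type} [Fintype V] [DecidableEq V] (G : SimpleGraph V)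
    [DecidableRel G.Adj] {ι : Type} [Fintype ι] (B : ι → SimpleGraph V)
    (hbip : ∀ i : ι, (B i).Colorable 2)
    (hcov : ∀ e ∈ G.edgeSet, ∃ i : ι, e ∈ (B i).edgeSet) :
    ∑ v : V, (Real.logb 2 (Fintype.card V) -
        Real.logb 2 ((Fintype.card V : ℝ) - G.degree v)) ≤
      ∑ i : ι, ((B i).support.ncard : ℝ) := by
  classical
  set n := Fintype.card V with hn
  set k := Fintype.card ι with hk
  -- colorings
  have hC : ∀ i, ∃ c : V → Fin 2, ∀ u v, (B i).Adj u v → c u ≠ c v := fun i => by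
    obtain ⟨c⟩ := hbip i
    exact ⟨c, fun u v h => c.valid h⟩
  choose c hc using hC
  set T : V → Finset ι := fun v => Finset.univ.filter (fun i => v ∈ (B i).support) with hT
  set m : V → ℕ := fun v => (T v).card with hm
  set A : (ι → Fin 2) → Finset V :=
    fun ε => Finset.univ.filter (fun v => ∀ i ∈ T v, ε i = c i v) with hA
  -- degrees
  have hd : ∀ v : V, G.degree v < n := fun v => G.degree_lt_card_verts v
  have hdpos : ∀ v : V, (0:ℝ) < (n:ℝ) - G.degree v := by
    intro v
    have := hd v
    have : (G.degree v : ℝ) < n := by exact_mod_cast this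
    linarith
  -- independence card bound
  have hAcard : ∀ ε, ∀ v ∈ A ε, (A ε).card ≤ n - G.degree v := by
    intro ε v hv
    have hsub : A ε ⊆ (G.neighborFinset v)ᶜ := by
      intro u hu
      rw [Finset.mem_compl, SimpleGraph.mem_neighborFinset]
      intro hadj
      obtain ⟨i, hi⟩ := hcov s(v, u) (G.mem_edgeSet.mpr hadj)
      have hBadj : (B i).Adj v u := (B i).mem_edgeSet.mp hi
      have hvs : v ∈ (B i).support := ⟨u, hBadj⟩
      have hus : u ∈ (B i).support := ⟨v, hBadj.symm⟩
      have h1 : ε i = c i v := by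
        have := (Finset.mem_filter.mp hv).2
        exact this i (by simp [hT, hvs])
      have h2 : ε i = c i u := by
        have := (Finset.mem_filter.mp hu).2
        exact this i (by simp [hT, hus])
      exact hc i v u hBadj (h1 ▸ h2 ▸ rfl)
    calc (A ε).card ≤ ((G.neighborFinset v)ᶜ).card := Finset.card_le_card hsub
      _ = n - G.degree v := by rw [Finset.card_compl, hn, G.card_neighborFinset_eq_degree]
  -- per-ε bound
  have key : ∀ ε : ι → Fin 2,
      ∑ v ∈ A ε, ((n:ℝ) - G.degree v)⁻¹ ≤ 1 := by
    intro ε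
    rcases (A ε).eq_empty_or_nonempty with h | h
    · simp [h]
    · have hcardpos : 0 < ((A ε).card : ℝ) := by
        exact_mod_cast Finset.card_pos.mpr h
      have hle : ∀ v ∈ A ε, ((n:ℝ) - G.degree v)⁻¹ ≤ (((A ε).card : ℝ))⁻¹ := by
        intro v hv
        apply inv_anti₀ hcardpos
        have h1 := hAcard ε v hv
        have h2 : ((A ε).card : ℝ) ≤ ((n - G.degree v : ℕ) : ℝ) := by exact_mod_cast h1
        calc ((A ε).card : ℝ) ≤ ((n - G.degree v : ℕ) : ℝ) := h2
          _ ≤ (n:ℝ) - G.degree v := by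
              rw [Nat.cast_sub (le_of_lt (hd v))]
      calc ∑ v ∈ A ε, ((n:ℝ) - G.degree v)⁻¹
          ≤ ∑ v ∈ A ε, (((A ε).card : ℝ))⁻¹ := Finset.sum_le_sum hle
        _ = ((A ε).card : ℝ) * (((A ε).card : ℝ))⁻¹ := by
            rw [Finset.sum_const, nsmul_eq_mul]
        _ = 1 := mul_inv_cancel₀ (ne_of_gt hcardpos)
  -- sum over all ε
  have total : ∑ v : V, (2:ℝ) ^ (k - m v) * ((n:ℝ) - G.degree v)⁻¹ ≤ 2 ^ k := by
    have h1 : ∑ ε : ι → Fin 2, ∑ v ∈ A ε, ((n:ℝ) - G.degree v)⁻¹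
        ≤ ∑ ε : ι → Fin 2, (1:ℝ) := Finset.sum_le_sum (fun ε _ => key ε)
    have h2 : ∑ ε : ι → Fin 2, (1:ℝ) = 2 ^ k := by
      rw [Finset.sum_const, nsmul_eq_mul, mul_one, Finset.card_univ, Fintype.card_fun]
      norm_num [hk]
    have h3 : ∑ ε : ι → Fin 2, ∑ v ∈ A ε, ((n:ℝ) - G.degree v)⁻¹
        = ∑ v : V, (2:ℝ) ^ (k - m v) * ((n:ℝ) - G.degree v)⁻¹ := by
      have : ∀ ε, ∑ v ∈ A ε, ((n:ℝ) - G.degree v)⁻¹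
          = ∑ v : V, if (∀ i ∈ T v, ε i = c i v) then ((n:ℝ) - G.degree v)⁻¹ else 0 := by
        intro ε
        rw [hA]
        rw [Finset.sum_filter]
      rw [Finset.sum_congr rfl (fun ε _ => this ε), Finset.sum_comm]
      apply Finset.sum_congr rfl
      intro v _
      rw [← Finset.sum_filter, Finset.sum_const, nsmul_eq_mul]
      have := ks_count (T v) (fun i => c i v)
      rw [this]
      push_cast
      rw [hm]
    rw [← h3]
    exact le_of_le_of_eq h1 h2
  -- normalize: divide by 2^k
  have hmk : ∀ v : V, m v ≤ k := fun v => by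
    rw [hm, hk]
    simpa using Finset.card_le_univ (T v)
  have h4 : ∑ v : V, ((n:ℝ) - G.degree v)⁻¹ / 2 ^ (m v) ≤ 1 := by
    have hpk : (0:ℝ) < 2 ^ k := by positivity
    have heq : ∀ v : V, (2:ℝ) ^ (k - m v) * ((n:ℝ) - G.degree v)⁻¹
        = 2 ^ k * (((n:ℝ) - G.degree v)⁻¹ / 2 ^ (m v)) := by
      intro v
      have hpow : (2:ℝ) ^ (m v) * 2 ^ (k - m v) = 2 ^ k := by
        rw [← pow_add, Nat.add_sub_cancel' (hmk v)]
      have h2 : (2:ℝ) ^ (k - m v) = 2 ^ k / 2 ^ (m v) := by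
        rw [eq_div_iff (by positivity), mul_comm, hpow]
      rw [h2]
      ring
    have := total
    rw [Finset.sum_congr rfl (fun v _ => heq v), ← Finset.mul_sum] at this
    calc ∑ v : V, ((n:ℝ) - G.degree v)⁻¹ / 2 ^ (m v)
        = 2 ^ k * (∑ v : V, ((n:ℝ) - G.degree v)⁻¹ / 2 ^ (m v)) / 2 ^ k := by
          field_simp
      _ ≤ 2 ^ k / 2 ^ k := by gcongr
      _ = 1 := by field_simp
  -- the nonempty case analysis
  rcases isEmpty_or_nonempty V with hV | hV
  · rw [Finset.univ_eq_empty, Finset.sum_empty]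
    exact Finset.sum_nonneg fun i _ => by positivity
  have hnpos : (0:ℝ) < n := by
    rw [hn]
    exact_mod_cast Fintype.card_pos
  -- define x
  set x : V → ℝ := fun v => (n:ℝ) * (((n:ℝ) - G.degree v)⁻¹ / 2 ^ (m v)) with hx
  have hxpos : ∀ v, 0 < x v := by
    intro v
    have := hdpos v
    rw [hx]
    positivity
  have hxsum : ∑ v : V, x v ≤ n := by
    rw [hx, ← Finset.mul_sum]
    calc (n:ℝ) * ∑ v : V, (((n:ℝ) - G.degree v)⁻¹ / 2 ^ (m v))
        ≤ (n:ℝ) * 1 := by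
          apply mul_le_mul_of_nonneg_left h4 (le_of_lt hnpos)
      _ = n := mul_one _
  have hlogsum : ∑ v : V, Real.log (x v) ≤ 0 := by
    calc ∑ v : V, Real.log (x v) ≤ ∑ v : V, (x v - 1) :=
          Finset.sum_le_sum fun v _ => Real.log_le_sub_one_of_pos (hxpos v)
      _ = (∑ v : V, x v) - n := by
          rw [Finset.sum_sub_distrib, Finset.sum_const, Finset.card_univ, nsmul_eq_mul,
            mul_one, hn]
      _ ≤ 0 := by linarith [hxsum]
  have hlogbsum : ∑ v : V, Real.logb 2 (x v) ≤ 0 := by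
    have h2 : (0:ℝ) < Real.log 2 := Real.log_pos (by norm_num)
    calc ∑ v : V, Real.logb 2 (x v) = (∑ v : V, Real.log (x v)) / Real.log 2 := by
          rw [Finset.sum_div]
          exact Finset.sum_congr rfl fun v _ => rfl
      _ ≤ 0 := div_nonpos_of_nonpos_of_nonneg hlogsum (le_of_lt h2)
  have hlogbx : ∀ v : V, Real.logb 2 (x v)
      = Real.logb 2 (n:ℝ) - Real.logb 2 ((n:ℝ) - G.degree v) - m v := by
    intro v
    have hdp := hdpos v
    have hxv : x v = (n:ℝ) / (((n:ℝ) - G.degree v) * 2 ^ (m v)) := by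
      rw [hx]
      field_simp
    rw [hxv, Real.logb_div (ne_of_gt hnpos) (by positivity),
      Real.logb_mul (ne_of_gt hdp) (by positivity), Real.logb_pow,
      Real.logb_self_eq_one (show (1:ℝ) < 2 by norm_num)]
    ring
  have hfinal : ∑ v : V, (Real.logb 2 (n:ℝ) - Real.logb 2 ((n:ℝ) - G.degree v))
      ≤ ∑ v : V, (m v : ℝ) := by
    have := hlogbsum
    rw [Finset.sum_congr rfl (fun v _ => hlogbx v), Finset.sum_sub_distrib] at this
    linarith
  -- double counting
  have hcount : ∑ v : V, (m v : ℝ) = ∑ i : ι, ((B i).support.ncard : ℝ) := by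
    have hNat : ∑ v : V, m v = ∑ i : ι, (B i).support.ncard := by
      have h1 : ∀ v : V, m v = ∑ i : ι, if v ∈ (B i).support then 1 else 0 := by
        intro v
        simp only [hm, hT, Finset.card_filter]
      have h2 : ∀ i : ι, (B i).support.ncard
          = ∑ v : V, if v ∈ (B i).support then 1 else 0 := by
        intro i
        rw [Set.ncard_eq_toFinset_card']
        rw [← Finset.card_filter]
        congr 1
        ext a
        simp [Set.mem_toFinset]
      rw [Finset.sum_congr rfl (fun v _ => h1 v), Finset.sum_comm,
        Finset.sum_congr rfl (fun i _ => (h2 i).symm)]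
    exact_mod_cast congrArg (Nat.cast (R := ℝ)) hNat
  rw [← hcount]
  exact hfinal
end

section
/- Let c, ε > 0 be constants and let G be an n-vertex graph whose complement has at most c·n^{2−ε} edges. Then for any bipartite covering B of G there is a vertex of G incident to edges from at least c'·log n of the bipartite graphs in B, where c' depends only on c and ε. -/
open SimpleGraph

/-- if the complement of an `n`-vertex graph `G` has at most `c·n^(2-ε)`
edges, then any bipartite covering of `G` has a vertex incident to edges of at least
`c'·log n` of the bipartite graphs, where `c'` depends only on `c` and `ε`. -/
theorem stmt7 (c ε : ℝ) (hc : 0 < c) (hε : 0 < ε) :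
    ∃ c' : ℝ, 0 < c' ∧ ∃ N : ℕ, ∀ n ≥ N,
      ∀ (G : SimpleGraph (Fin n)),
        ((Gᶜ.edgeSet.ncard : ℝ) ≤ c * (n : ℝ) ^ ((2 : ℝ) - ε)) →
        ∀ {ι : Type} [Fintype ι] (B : ι → SimpleGraph (Fin n)),
          (∀ i : ι, (B i).Colorable 2) →
          (∀ e ∈ G.edgeSet, ∃ i : ι, e ∈ (B i).edgeSet) →
          ∃ v : Fin n, c' * Real.log n ≤ ({i : ι | v ∈ (B i).support}.ncard : ℝ) := by
  classical
  set ε' : ℝ := min ε 1 with hε'def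
  have hε'pos : 0 < ε' := lt_min hε one_pos
  have hε'le1 : ε' ≤ 1 := min_le_right _ _
  have hε'leε : ε' ≤ ε := min_le_left _ _
  have hlog2 : 0 < Real.log 2 := Real.log_pos (by norm_num)
  refine ⟨ε' / (4 * Real.log 2), by positivity, ?_⟩
  set c' : ℝ := ε' / (4 * Real.log 2) with hc'def
  refine ⟨max 16 ⌈(4 * c + 1) ^ ((2:ℝ) / ε')⌉₊, ?_⟩
  intro n hn G hG ι _ B hB2 hcov
  have hn16 : (16 : ℕ) ≤ n := le_trans (le_max_left _ _) hn
  have hnM : (4 * c + 1) ^ ((2:ℝ) / ε') ≤ (n : ℝ) :=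
    le_trans (Nat.le_ceil _) (by exact_mod_cast le_trans (le_max_right _ _) hn)
  have hn0 : (0:ℝ) < n := by positivity
  have hn1 : (1:ℝ) ≤ n := by exact_mod_cast le_trans (by norm_num) hn16
  by_contra hcon
  push_neg at hcon
  -- colorings
  set C : ∀ i : ι, (B i).Coloring (Fin 2) := fun i => (hB2 i).some with hCdef
  set Sv : Fin n → Finset ι := fun v => Finset.univ.filter (fun i => v ∈ (B i).support)
    with hSvdef
  have hSvcard : ∀ v, ({i : ι | v ∈ (B i).support}.ncard : ℝ) = ((Sv v).card : ℝ) := by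
    intro v
    rw [Set.ncard_eq_toFinset_card']
    congr 2
    ext i
    simp [hSvdef]
  set W : (ι → Fin 2) → Finset (Fin n) :=
    fun σ => Finset.univ.filter (fun v => ∀ i ∈ Sv v, C i v = σ i) with hWdef
  -- independence of W σ in G
  have hind : ∀ σ, ∀ u ∈ W σ, ∀ v ∈ W σ, u ≠ v → Gᶜ.Adj u v := by
    intro σ u hu v hv huv
    rw [compl_adj]
    refine ⟨huv, fun hadj => ?_⟩
    obtain ⟨i, hi⟩ := hcov s(u, v) hadj
    rw [mem_edgeSet] at hi
    have hiu : i ∈ Sv u := by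
      simp only [hSvdef, Finset.mem_filter, Finset.mem_univ, true_and]
      exact (B i).mem_support.mpr ⟨v, hi⟩
    have hiv : i ∈ Sv v := by
      simp only [hSvdef, Finset.mem_filter, Finset.mem_univ, true_and]
      exact (B i).mem_support.mpr ⟨u, hi.symm⟩
    have h1 := (Finset.mem_filter.mp hu).2 i hiu
    have h2 := (Finset.mem_filter.mp hv).2 i hiv
    exact (C i).valid hi (h1.trans h2.symm)
  -- degree bound: |W|(|W|-1) ≤ 2 * edges of complement
  have hWedge : ∀ σ, (W σ).card * ((W σ).card - 1) ≤ 2 * Gᶜ.edgeFinset.card := by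
    intro σ
    have hdeg : ∀ v ∈ W σ, (W σ).card - 1 ≤ Gᶜ.degree v := by
      intro v hv
      have hsub : (W σ).erase v ⊆ Gᶜ.neighborFinset v := by
        intro u hu
        rw [SimpleGraph.mem_neighborFinset]
        exact (hind σ u (Finset.mem_of_mem_erase hu) v hv
          (Finset.ne_of_mem_erase hu)).symm
      calc (W σ).card - 1 = ((W σ).erase v).card := (Finset.card_erase_of_mem hv).symm
        _ ≤ _ := Finset.card_le_card hsub
        _ = Gᶜ.degree v := (SimpleGraph.card_neighborFinset_eq_degree _ _)
    calc (W σ).card * ((W σ).card - 1)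
        = ∑ v ∈ W σ, ((W σ).card - 1) := by rw [Finset.sum_const, smul_eq_mul]
      _ ≤ ∑ v ∈ W σ, Gᶜ.degree v := Finset.sum_le_sum hdeg
      _ ≤ ∑ v, Gᶜ.degree v := Finset.sum_le_sum_of_subset (Finset.subset_univ _)
      _ = 2 * Gᶜ.edgeFinset.card := SimpleGraph.sum_degrees_eq_twice_card_edges _
  -- per-vertex count
  have hcount : ∀ v : Fin n,
      2 ^ (Fintype.card ι - (Sv v).card) ≤
        (Finset.univ.filter (fun σ : ι → Fin 2 => v ∈ W σ)).card := by
    intro v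
    have := Fintype.card_le_of_injective
      (β := {σ : ι → Fin 2 // v ∈ W σ})
      (fun τ : {i : ι // i ∉ Sv v} → Fin 2 =>
        ⟨fun i => if h : i ∈ Sv v then C i v else τ ⟨i, h⟩, by
          simp only [hWdef, Finset.mem_filter, Finset.mem_univ, true_and]
          intro i hi
          simp [hi]⟩)
      (by
        intro τ τ' h
        funext i
        have := congrArg (fun f => f.1 i.1) h
        simpa [dif_neg i.2] using this)
    calc 2 ^ (Fintype.card ι - (Sv v).card)
        = Fintype.card ({i : ι // i ∉ Sv v} → Fin 2) := by
          rw [Fintype.card_fun, Fintype.card_fin, Fintype.card_subtype_compl,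
            Fintype.card_coe]
      _ ≤ Fintype.card {σ : ι → Fin 2 // v ∈ W σ} := this
      _ = (Finset.univ.filter (fun σ : ι → Fin 2 => v ∈ W σ)).card :=
          Fintype.card_subtype _
  -- double counting
  have hdouble : ∑ σ : ι → Fin 2, (W σ).card
      = ∑ v : Fin n, (Finset.univ.filter (fun σ : ι → Fin 2 => v ∈ W σ)).card := by
    have h1 : ∀ σ, (W σ).card = ∑ v : Fin n, if v ∈ W σ then 1 else 0 := by
      intro σ
      rw [Finset.sum_ite_mem, Finset.univ_inter, Finset.sum_const, smul_eq_mul, mul_one]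
    have h2 : ∀ v : Fin n, (Finset.univ.filter (fun σ : ι → Fin 2 => v ∈ W σ)).card
        = ∑ σ : ι → Fin 2, if v ∈ W σ then 1 else 0 := by
      intro v
      rw [Finset.card_filter]
    simp only [h1, h2]
    exact Finset.sum_comm
  -- real bounds
  set s : ℝ := (n : ℝ) ^ ((1:ℝ) - ε'/4) with hsdef
  have hs2 : (2:ℝ) ≤ s := by
    have h1 : (n:ℝ) ^ ((3:ℝ)/4) ≤ s := by
      apply Real.rpow_le_rpow_of_exponent_le hn1
      linarith
    refine le_trans ?_ h1
    have h16 : (16:ℝ) ^ ((3:ℝ)/4) ≤ (n:ℝ) ^ ((3:ℝ)/4) := by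
      apply Real.rpow_le_rpow (by norm_num) (by exact_mod_cast hn16) (by norm_num)
    refine le_trans ?_ h16
    have : (16:ℝ) ^ ((3:ℝ)/4) = 8 := by
      rw [show (16:ℝ) = 2 ^ (4:ℝ) by
        rw [show (4:ℝ) = ((4:ℕ):ℝ) by norm_num, Real.rpow_natCast]; norm_num]
      rw [← Real.rpow_mul (by norm_num)]
      rw [show (4:ℝ) * (3/4) = ((3:ℕ):ℝ) by norm_num, Real.rpow_natCast]
      norm_num
    rw [this]; norm_num
  -- key: 2^(|ι| - sv) ≥ 2^|ι| / n^(ε'/4)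
  have hpow : ∀ v : Fin n,
      (2:ℝ) ^ (Fintype.card ι) / (n:ℝ) ^ (ε'/4)
        ≤ ((2:ℕ) ^ (Fintype.card ι - (Sv v).card) : ℝ) := by
    intro v
    have hsvle : (Sv v).card ≤ Fintype.card ι := Finset.card_le_univ _
    have hsv : ((Sv v).card : ℝ) < c' * Real.log n := by
      rw [← hSvcard]; exact hcon v
    have h2sv : (2:ℝ) ^ ((Sv v).card : ℕ) ≤ (n:ℝ) ^ (ε'/4) := by
      have e1 : (2:ℝ) ^ ((Sv v).card : ℕ) = (2:ℝ) ^ (((Sv v).card : ℕ) : ℝ) := by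
        rw [Real.rpow_natCast]
      rw [e1]
      have e2 : (2:ℝ) ^ (((Sv v).card : ℕ) : ℝ) ≤ (2:ℝ) ^ (c' * Real.log n) :=
        Real.rpow_le_rpow_of_exponent_le (by norm_num) hsv.le
      refine le_trans e2 (le_of_eq ?_)
      rw [Real.rpow_def_of_pos (by norm_num : (0:ℝ) < 2),
        Real.rpow_def_of_pos hn0]
      congr 1
      rw [hc'def]
      field_simp
    have hcast : ((2:ℕ) ^ (Fintype.card ι - (Sv v).card) : ℝ)
        = (2:ℝ) ^ (Fintype.card ι) / (2:ℝ) ^ ((Sv v).card) := by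
      push_cast
      rw [eq_div_iff (by positivity), ← pow_add, Nat.sub_add_cancel hsvle]
    rw [hcast]
    apply div_le_div_of_nonneg_left (by positivity) (by positivity) h2sv
  -- pigeonhole: some W σ is large
  have hbig : ∃ σ : ι → Fin 2, s ≤ ((W σ).card : ℝ) := by
    by_contra hall
    push_neg at hall
    have hsum1 : (∑ σ : ι → Fin 2, ((W σ).card : ℝ))
        < (Fintype.card (ι → Fin 2) : ℝ) * s := by
      have h := Finset.sum_lt_sum_of_nonempty
        (s := (Finset.univ : Finset (ι → Fin 2)))
        (f := fun σ => ((W σ).card : ℝ)) (g := fun _ => s)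
        Finset.univ_nonempty (fun σ _ => hall σ)
      calc (∑ σ : ι → Fin 2, ((W σ).card : ℝ)) < ∑ _σ : ι → Fin 2, s := h
        _ = (Fintype.card (ι → Fin 2) : ℝ) * s := by
            rw [Finset.sum_const, Finset.card_univ, nsmul_eq_mul]
    have hsum2 : (Fintype.card (ι → Fin 2) : ℝ) * s
        ≤ (∑ σ : ι → Fin 2, ((W σ).card : ℝ)) := by
      have e0 : (∑ σ : ι → Fin 2, ((W σ).card : ℝ))
          = ((∑ σ : ι → Fin 2, (W σ).card : ℕ) : ℝ) := by push_cast; ring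
      rw [e0, hdouble]
      push_cast
      have hlow : ∀ v : Fin n, (2:ℝ) ^ (Fintype.card ι) / (n:ℝ) ^ (ε'/4)
          ≤ ((Finset.univ.filter (fun σ : ι → Fin 2 => v ∈ W σ)).card : ℝ) := by
        intro v
        refine le_trans (hpow v) ?_
        exact_mod_cast hcount v
      calc (Fintype.card (ι → Fin 2) : ℝ) * s
          = (n:ℝ) * ((2:ℝ) ^ (Fintype.card ι) / (n:ℝ) ^ (ε'/4)) := by
            rw [Fintype.card_fun, Fintype.card_fin]
            push_cast
            rw [hsdef, Real.rpow_sub hn0, Real.rpow_one]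
            ring
        _ = ∑ _v : Fin n, ((2:ℝ) ^ (Fintype.card ι) / (n:ℝ) ^ (ε'/4)) := by
            rw [Finset.sum_const, Finset.card_univ, Fintype.card_fin, nsmul_eq_mul]
        _ ≤ _ := Finset.sum_le_sum (fun v _ => hlow v)
    linarith
  obtain ⟨σ₀, hσ₀⟩ := hbig
  -- final arithmetic
  set w : ℕ := (W σ₀).card with hwdef
  have hw1 : 1 ≤ w := by
    by_contra h
    push_neg at h
    interval_cases w
    · simp only [Nat.cast_zero] at hσ₀; linarith
  have hwR : s ≤ (w:ℝ) := hσ₀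
  have hedge : (w:ℝ) * ((w:ℝ) - 1) ≤ 2 * (Gᶜ.edgeFinset.card : ℝ) := by
    have := hWedge σ₀
    have hcast : ((w * (w - 1) : ℕ) : ℝ) = (w:ℝ) * ((w:ℝ) - 1) := by
      push_cast [Nat.cast_sub hw1]
      ring
    calc (w:ℝ) * ((w:ℝ) - 1) = ((w * (w - 1) : ℕ) : ℝ) := hcast.symm
      _ ≤ ((2 * Gᶜ.edgeFinset.card : ℕ) : ℝ) := by exact_mod_cast this
      _ = 2 * (Gᶜ.edgeFinset.card : ℝ) := by push_cast; ring
  have hcompl : (Gᶜ.edgeFinset.card : ℝ) ≤ c * (n:ℝ) ^ ((2:ℝ) - ε') := by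
    have e : (Gᶜ.edgeSet.ncard : ℝ) = (Gᶜ.edgeFinset.card : ℝ) := by
      rw [← SimpleGraph.coe_edgeFinset, Set.ncard_coe_finset]
    rw [← e]
    refine le_trans hG ?_
    have : (n:ℝ) ^ ((2:ℝ) - ε) ≤ (n:ℝ) ^ ((2:ℝ) - ε') :=
      Real.rpow_le_rpow_of_exponent_le hn1 (by linarith)
    nlinarith
  have hss : s * (s - 1) ≤ (w:ℝ) * ((w:ℝ) - 1) :=
    mul_le_mul hwR (by linarith) (by linarith) (Nat.cast_nonneg w)
  have hs' : (n:ℝ) ^ ((2:ℝ) - ε'/2) / 2 ≤ s * (s - 1) := by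
    have e1 : s * s = (n:ℝ) ^ ((2:ℝ) - ε'/2) := by
      rw [hsdef, ← Real.rpow_add hn0]
      norm_num
      ring_nf
    nlinarith
  -- combine
  have hfinal : (n:ℝ) ^ ((2:ℝ) - ε'/2) ≤ 4 * c * (n:ℝ) ^ ((2:ℝ) - ε') := by
    nlinarith
  have hsplit : (n:ℝ) ^ ((2:ℝ) - ε'/2)
      = (n:ℝ) ^ ((2:ℝ) - ε') * (n:ℝ) ^ (ε'/2) := by
    rw [← Real.rpow_add hn0]; ring_nf
  have hposn : (0:ℝ) < (n:ℝ) ^ ((2:ℝ) - ε') := Real.rpow_pos_of_pos hn0 _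
  have hkey : (n:ℝ) ^ (ε'/2) ≤ 4 * c := by
    rw [hsplit] at hfinal
    by_contra h
    push_neg at h
    have h2 := mul_lt_mul_of_pos_left h hposn
    linarith
  have hlower : 4 * c + 1 ≤ (n:ℝ) ^ (ε'/2) := by
    have h1 : ((4 * c + 1) ^ ((2:ℝ)/ε')) ^ (ε'/2) ≤ (n:ℝ) ^ (ε'/2) :=
      Real.rpow_le_rpow (by positivity) hnM (by positivity)
    refine le_trans (le_of_eq ?_) h1
    rw [← Real.rpow_mul (by positivity)]
    rw [show (2:ℝ)/ε' * (ε'/2) = 1 by field_simp]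
    rw [Real.rpow_one]
  linarith
end

section
/- Let G be an edge-ordered graph with minimal edge ab, and suppose there exist vertices v, w ∈ N_G(a) ∩ N_G(b) with l(av) < l(aw) and l(bv) > l(bw). Then ssat_m(n,G) = Ω(n√(log n)), and hence also sat_m(n,G) = Ω(n√(log n)). -/
open SimpleGraph

section AuxLemmas
open Finset

lemma card_agree {α : Type} [Fintype α] [DecidableEq α] (s : Finset α) (g : α → Bool) :
    (Finset.univ.filter (fun h : α → Bool => ∀ p ∈ s, h p = g p)).card
      = 2 ^ (Fintype.card α - s.card) := by
  classical
  have : (Finset.univ.filter (fun h : α → Bool => ∀ p ∈ s, h p = g p)).card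
      = Fintype.card ({a : α // a ∉ s} → Bool) := by
    apply Finset.card_nbij' (i := fun h => fun a => h a.1)
      (j := fun f => fun a => if ha : a ∈ s then g a else f ⟨a, ha⟩)
    · intro h hh; simp
    · intro f hf
      simp only [Finset.mem_coe, mem_filter, mem_univ, true_and]
      intro p hp; simp [hp]
    · intro h hh
      simp only [Finset.mem_coe, mem_filter, mem_univ, true_and] at hh
      funext a
      by_cases ha : a ∈ s
      · simp [ha, hh a ha]
      · simp [ha]
    · intro f hf
      funext a
      rcases a with ⟨a, ha⟩
      simp [ha]
  rw [this, Fintype.card_fun, Fintype.card_bool, Fintype.card_subtype_compl]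
  congr 1
  simp [Fintype.card_subtype]

lemma tuza {α ι : Type} [Fintype α] [DecidableEq α] [DecidableEq ι]
    (I : Finset ι) (dom : ι → Finset α) (g : ι → α → Bool) (D : ℕ)
    (hdom : ∀ i ∈ I, (dom i).card ≤ D)
    (hconf : ∀ i ∈ I, ∀ j ∈ I, i ≠ j →
      ∃ p, p ∈ dom i ∧ p ∈ dom j ∧ g i p ≠ g j p) :
    I.card ≤ 2 ^ D := by
  classical
  set F : ι → Finset (α → Bool) :=
    fun i => Finset.univ.filter (fun h => ∀ p ∈ dom i, h p = g i p) with hF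
  have hFcard : ∀ i ∈ I, (F i).card = 2 ^ (Fintype.card α - (dom i).card) :=
    fun i _ => card_agree (dom i) (g i)
  have hdisj : ∀ i ∈ I, ∀ j ∈ I, i ≠ j → Disjoint (F i) (F j) := by
    intro i hi j hj hij
    rw [Finset.disjoint_left]
    intro h hhi hhj
    simp only [hF, mem_filter, mem_univ, true_and] at hhi hhj
    obtain ⟨p, hpi, hpj, hne⟩ := hconf i hi j hj hij
    exact hne ((hhi p hpi).symm.trans (hhj p hpj))
  have hsum : ∑ i ∈ I, (F i).card ≤ 2 ^ (Fintype.card α) := by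
    rw [← Finset.card_biUnion hdisj]
    calc (I.biUnion F).card ≤ (Finset.univ : Finset (α → Bool)).card :=
          Finset.card_le_card (Finset.subset_univ _)
      _ = 2 ^ (Fintype.card α) := by rw [Finset.card_univ, Fintype.card_fun]; simp
  have hlow : ∀ i ∈ I, 2 ^ (Fintype.card α - D) ≤ (F i).card := by
    intro i hi
    rw [hFcard i hi]
    exact Nat.pow_le_pow_right (by norm_num) (Nat.sub_le_sub_left (hdom i hi) _)
  have : I.card * 2 ^ (Fintype.card α - D) ≤ 2 ^ (Fintype.card α) := by
    calc I.card * 2 ^ (Fintype.card α - D) = ∑ _i ∈ I, 2 ^ (Fintype.card α - D) := by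
          rw [Finset.sum_const, smul_eq_mul]
      _ ≤ ∑ i ∈ I, (F i).card := Finset.sum_le_sum hlow
      _ ≤ 2 ^ (Fintype.card α) := hsum
  have h2 : 2 ^ (Fintype.card α) ≤ 2 ^ D * 2 ^ (Fintype.card α - D) := by
    rw [← pow_add]
    exact Nat.pow_le_pow_right (by norm_num) (by omega)
  have := this.trans h2
  exact Nat.le_of_mul_le_mul_right this (Nat.pow_pos (by norm_num))

lemma greedy_indep {V : Type} [DecidableEq V] (H : SimpleGraph V) [DecidableRel H.Adj] (d : ℕ) :
    ∀ s : Finset V, (∀ u ∈ s, (s.filter (H.Adj u)).card ≤ d) →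
      ∃ t ⊆ s, (∀ u ∈ t, ∀ v ∈ t, u ≠ v → ¬H.Adj u v) ∧ s.card ≤ (d + 1) * t.card := by
  intro s
  induction s using Finset.strongInduction with
  | _ s ih =>
    intro hdeg
    rcases s.eq_empty_or_nonempty with rfl | ⟨u, hu⟩
    · exact ⟨∅, by simp⟩
    · set X : Finset V := insert u (s.filter (H.Adj u)) with hX
      set s' : Finset V := s \ X with hs'
      have hss : s' ⊂ s := by
        apply Finset.sdiff_ssubset
        · intro x hx
          rw [hX, Finset.mem_insert] at hx
          rcases hx with rfl | hx
          · exact hu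
          · exact Finset.mem_of_mem_filter _ hx
        · exact ⟨u, by simp [hX]⟩
      obtain ⟨t', ht's, ht'ind, ht'card⟩ := ih s' hss (by
        intro x hx
        calc (s'.filter (H.Adj x)).card ≤ (s.filter (H.Adj x)).card :=
              Finset.card_le_card (Finset.filter_subset_filter _ (Finset.sdiff_subset))
          _ ≤ d := hdeg x (Finset.mem_sdiff.mp hx).1)
      have hut' : u ∉ t' := fun h => by
        have := ht's h
        rw [hs', Finset.mem_sdiff] at this
        exact this.2 (by simp [hX])
      refine ⟨insert u t', ?_, ?_, ?_⟩
      · intro x hx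
        rcases Finset.mem_insert.mp hx with rfl | hx
        · exact hu
        · exact (Finset.mem_sdiff.mp (ht's hx)).1
      · intro x hx y hy hxy
        have key : ∀ z ∈ t', ¬H.Adj u z := by
          intro z hz hadj
          have := (Finset.mem_sdiff.mp (ht's hz)).2
          exact this (by
            rw [hX, Finset.mem_insert]
            exact Or.inr (Finset.mem_filter.mpr ⟨(Finset.mem_sdiff.mp (ht's hz)).1, hadj⟩))
        rcases Finset.mem_insert.mp hx with hxu | hxt
        · rcases Finset.mem_insert.mp hy with hyu | hyt
          · exact absurd (hxu.trans hyu.symm) hxy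
          · subst hxu; exact key y hyt
        · rcases Finset.mem_insert.mp hy with hyu | hyt
          · subst hyu; exact fun hadj => key x hxt hadj.symm
          · exact ht'ind x hxt y hyt hxy
      · have h1 : s.card ≤ s'.card + (d + 1) := by
          have hXcard : X.card ≤ d + 1 := by
            calc X.card ≤ (s.filter (H.Adj u)).card + 1 := Finset.card_insert_le _ _
              _ ≤ d + 1 := by have := hdeg u hu; omega
          have := Finset.card_sdiff_add_card_eq_card (Finset.inter_subset_left (s₁ := s) (s₂ := X))
          have h2 : s'.card = (s \ (s ∩ X)).card := by
            rw [hs', Finset.sdiff_inter_self_left]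
          have h3 : (s ∩ X).card ≤ X.card := Finset.card_le_card Finset.inter_subset_right
          omega
        rw [Finset.card_insert_of_notMem hut']
        calc s.card ≤ s'.card + (d + 1) := h1
          _ ≤ (d + 1) * t'.card + (d + 1) := by omega
          _ = (d + 1) * (t'.card + 1) := by ring

lemma crossBound {n : ℕ} (H : SimpleGraph (Fin n)) [DecidableRel H.Adj]
    (l : Sym2 (Fin n) → ℝ)
    (hcross : ∀ u₁ u₂ : Fin n, u₁ ≠ u₂ → ¬H.Adj u₁ u₂ →
      ∃ x y, x ≠ y ∧ H.Adj u₁ x ∧ H.Adj u₁ y ∧ H.Adj u₂ x ∧ H.Adj u₂ y ∧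
        l s(u₁, x) < l s(u₁, y) ∧ l s(u₂, y) < l s(u₂, x))
    (d : ℕ) :
    (d + 1) * n ≤ 2 * H.edgeFinset.card + (d + 1) ^ 2 * 2 ^ (d * d) := by
  classical
  set A : Finset (Fin n) := Finset.univ.filter (fun u => d + 1 ≤ H.degree u) with hA
  set B : Finset (Fin n) := Finset.univ \ A with hB
  have hAcard : (d + 1) * A.card ≤ 2 * H.edgeFinset.card := by
    calc (d + 1) * A.card = ∑ _u ∈ A, (d + 1) := by rw [Finset.sum_const, smul_eq_mul, mul_comm]
      _ ≤ ∑ u ∈ A, H.degree u := Finset.sum_le_sum (fun u hu => by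
          rw [hA, Finset.mem_filter] at hu; exact hu.2)
      _ ≤ ∑ u, H.degree u := Finset.sum_le_sum_of_subset (Finset.subset_univ _)
      _ = 2 * H.edgeFinset.card := H.sum_degrees_eq_twice_card_edges
  have hBdeg : ∀ u ∈ B, H.degree u ≤ d := by
    intro u hu
    rw [hB, Finset.mem_sdiff, hA, Finset.mem_filter] at hu
    have := hu.2
    simp only [Finset.mem_univ, true_and, not_le] at this
    omega
  obtain ⟨t, hts, htind, htcard⟩ := greedy_indep H d B (by
    intro u hu
    calc (B.filter (H.Adj u)).card ≤ (Finset.univ.filter (H.Adj u)).card :=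
          Finset.card_le_card (Finset.filter_subset_filter _ (Finset.subset_univ _))
      _ = H.degree u := by rw [SimpleGraph.degree]; congr 1; ext x; simp [SimpleGraph.neighborFinset]
      _ ≤ d := hBdeg u hu)
  -- apply tuza to t
  have htuza : t.card ≤ 2 ^ (d * d) := by
    apply tuza t (fun u => ((H.neighborFinset u) ×ˢ (H.neighborFinset u)).filter
        (fun p => p.1 < p.2))
      (fun u p => decide (l s(u, p.1) < l s(u, p.2))) (d * d)
    · intro i hi
      calc _ ≤ ((H.neighborFinset i) ×ˢ (H.neighborFinset i)).card :=
            Finset.card_le_card (Finset.filter_subset _ _)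
        _ = H.degree i * H.degree i := by rw [Finset.card_product]; rfl
        _ ≤ d * d := Nat.mul_le_mul (hBdeg i (hts hi)) (hBdeg i (hts hi))
    · intro i hi j hj hij
      obtain ⟨x, y, hxy, hix, hiy, hjx, hjy, ho1, ho2⟩ :=
        hcross i j hij (htind i hi j hj hij)
      rcases lt_trichotomy x y with hlt | heq | hgt
      · refine ⟨(x, y), ?_, ?_, ?_⟩
        · simp [SimpleGraph.mem_neighborFinset, hix, hiy, hlt]
        · simp [SimpleGraph.mem_neighborFinset, hjx, hjy, hlt]
        · intro hcontra
          rw [decide_eq_decide] at hcontra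
          exact absurd (hcontra.mp ho1) (lt_asymm ho2)
      · exact absurd heq hxy
      · refine ⟨(y, x), ?_, ?_, ?_⟩
        · simp [SimpleGraph.mem_neighborFinset, hix, hiy, hgt]
        · simp [SimpleGraph.mem_neighborFinset, hjx, hjy, hgt]
        · intro hcontra
          rw [decide_eq_decide] at hcontra
          exact absurd (hcontra.mpr ho2) (lt_asymm ho1)
  have hBcard : B.card ≤ (d + 1) * 2 ^ (d * d) := by
    calc B.card ≤ (d + 1) * t.card := htcard
      _ ≤ (d + 1) * 2 ^ (d * d) := Nat.mul_le_mul_left _ htuza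
  have hn : n = A.card + B.card := by
    rw [hB]
    have : A ⊆ Finset.univ := Finset.subset_univ _
    rw [Finset.card_sdiff_of_subset this, Finset.card_univ, Fintype.card_fin]
    have := Finset.card_le_card this
    rw [Finset.card_univ, Fintype.card_fin] at this
    omega
  calc (d + 1) * n = (d + 1) * A.card + (d + 1) * B.card := by
        conv_lhs => rw [hn]
        ring
    _ ≤ 2 * H.edgeFinset.card + (d + 1) ^ 2 * 2 ^ (d * d) := by
        have h2 : (d + 1) * B.card ≤ (d + 1) ^ 2 * 2 ^ (d * d) := by
          calc (d + 1) * B.card ≤ (d + 1) * ((d + 1) * 2 ^ (d * d)) :=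
                Nat.mul_le_mul_left _ hBcard
            _ = (d + 1) ^ 2 * 2 ^ (d * d) := by ring
        omega
section Red
variable {W : Type} (G : SimpleGraph W) (lG : Sym2 W → ℝ)

/-- a label strictly below all edge labels exists (finite vertex type) -/
lemma exists_low_label {n : ℕ} (H : SimpleGraph (Fin n)) (lH : Sym2 (Fin n) → ℝ) :
    ∃ t : ℝ, ∀ e ∈ H.edgeSet, t < lH e := by
  have hfin : (lH '' H.edgeSet).Finite := (H.edgeSet.toFinite).image lH
  refine ⟨sInf (lH '' H.edgeSet) - 1, fun e he => ?_⟩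
  have h1 : sInf (lH '' H.edgeSet) ≤ lH e :=
    csInf_le hfin.bddBelow ⟨e, he, rfl⟩
  linarith

lemma ssat_cross {n : ℕ} (H : SimpleGraph (Fin n)) (lH : Sym2 (Fin n) → ℝ)
    (a b v w : W) (hab : G.Adj a b)
    (hmin : ∀ e ∈ G.edgeSet, e ≠ s(a, b) → lG s(a, b) < lG e)
    (hav : G.Adj a v) (haw : G.Adj a w) (hbv : G.Adj b v) (hbw : G.Adj b w)
    (hord1 : lG s(a, v) < lG s(a, w)) (hord2 : lG s(b, w) < lG s(b, v))
    (hss : SsatMSat H lH G lG) :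
    ∀ u₁ u₂ : Fin n, u₁ ≠ u₂ → ¬H.Adj u₁ u₂ →
      ∃ x y, x ≠ y ∧ H.Adj u₁ x ∧ H.Adj u₁ y ∧ H.Adj u₂ x ∧ H.Adj u₂ y ∧
        lH s(u₁, x) < lH s(u₁, y) ∧ lH s(u₂, y) < lH s(u₂, x) := by
  intro u₁ u₂ hne hnadj
  obtain ⟨t, ht⟩ := exists_low_label H lH
  obtain ⟨f, ⟨finj, fadj, ford⟩, e, he, hmap⟩ := hss u₁ u₂ hne hnadj t ht
  set H₂ := H ⊔ fromEdgeSet {s(u₁, u₂)} with hH₂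
  set lH₂ : Sym2 (Fin n) → ℝ := fun e => if e = s(u₁, u₂) then t else lH e with hlH₂
  have hvw : v ≠ w := by
    intro hvw; rw [hvw] at hord1; exact lt_irrefl _ hord1
  -- the minimal edge must be mapped onto the new edge
  have heab : e = s(a, b) := by
    by_contra hneq
    have h1 : lG s(a, b) < lG e := hmin e he hneq
    have h2 := (ford s(a, b) (G.mem_edgeSet.mpr hab) e he).mp h1
    rw [hmap] at h2
    simp only [hlH₂, if_pos rfl] at h2
    by_cases hc : Sym2.map f s(a, b) = s(u₁, u₂)
    · rw [hc] at h2; simp at h2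
    · rw [if_neg hc] at h2
      have hadj2 : H₂.Adj (f a) (f b) := fadj a b hab
      rw [hH₂, SimpleGraph.sup_adj] at hadj2
      rcases hadj2 with hadj2 | hadj2
      · have := ht _ (H.mem_edgeSet.mpr hadj2)
        rw [Sym2.map_pair_eq] at h2 hc
        exact absurd h2 (not_lt.mpr (le_of_lt this))
      · rw [SimpleGraph.fromEdgeSet_adj] at hadj2
        rw [Sym2.map_pair_eq] at hc
        exact hc (Set.mem_singleton_iff.mp hadj2.1)
  subst heab
  rw [Sym2.map_pair_eq] at hmap
  -- helper: other edges incident to a,b map to H-edges distinct from the new edge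
  have key : ∀ p q : W, G.Adj p q → s(p, q) ≠ s(a, b) →
      H.Adj (f p) (f q) ∧ s(f p, f q) ≠ s(u₁, u₂) := by
    intro p q hpq hpqab
    have hne2 : s(f p, f q) ≠ s(u₁, u₂) := by
      intro hc
      rw [← hmap] at hc
      rw [Sym2.eq_iff] at hc
      rcases hc with ⟨h1, h2⟩ | ⟨h1, h2⟩
      · exact hpqab (by rw [Sym2.eq_iff]; exact Or.inl ⟨finj h1, finj h2⟩)
      · exact hpqab (by rw [Sym2.eq_iff]; exact Or.inr ⟨finj h1, finj h2⟩)
    refine ⟨?_, hne2⟩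
    have hadj2 : H₂.Adj (f p) (f q) := fadj p q hpq
    rw [hH₂, SimpleGraph.sup_adj] at hadj2
    rcases hadj2 with hadj2 | hadj2
    · exact hadj2
    · rw [SimpleGraph.fromEdgeSet_adj] at hadj2
      exact absurd (Set.mem_singleton_iff.mp hadj2.1) hne2
  have hav' := key a v hav (by
    intro hc
    rcases Sym2.eq_iff.mp hc with ⟨_, h2⟩ | ⟨h1, _⟩
    exacts [hbv.ne h2.symm, hab.ne h1])
  have haw' := key a w haw (by
    intro hc
    rcases Sym2.eq_iff.mp hc with ⟨_, h2⟩ | ⟨h1, _⟩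
    exacts [hbw.ne h2.symm, hab.ne h1])
  have hbv' := key b v hbv (by
    intro hc
    rcases Sym2.eq_iff.mp hc with ⟨h1, _⟩ | ⟨_, h2⟩
    exacts [hab.ne h1.symm, hav.ne h2.symm])
  have hbw' := key b w hbw (by
    intro hc
    rcases Sym2.eq_iff.mp hc with ⟨h1, _⟩ | ⟨_, h2⟩
    exacts [hab.ne h1.symm, haw.ne h2.symm])
  -- transfer the two order relations
  have ho1 : lH s(f a, f v) < lH s(f a, f w) := by
    have := (ford s(a, v) (G.mem_edgeSet.mpr hav) s(a, w) (G.mem_edgeSet.mpr haw)).mp hord1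
    rw [Sym2.map_pair_eq, Sym2.map_pair_eq] at this
    simp only [hlH₂, if_neg hav'.2, if_neg haw'.2] at this
    exact this
  have ho2 : lH s(f b, f w) < lH s(f b, f v) := by
    have := (ford s(b, w) (G.mem_edgeSet.mpr hbw) s(b, v) (G.mem_edgeSet.mpr hbv)).mp hord2
    rw [Sym2.map_pair_eq, Sym2.map_pair_eq] at this
    simp only [hlH₂, if_neg hbw'.2, if_neg hbv'.2] at this
    exact this
  have hfvw : f v ≠ f w := fun h => hvw (finj h)
  rcases Sym2.eq_iff.mp hmap with ⟨h1, h2⟩ | ⟨h1, h2⟩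
  · -- f a = u₁, f b = u₂
    subst h1; subst h2
    exact ⟨f v, f w, hfvw, hav'.1, haw'.1, hbv'.1, hbw'.1, ho1, ho2⟩
  · -- f a = u₂, f b = u₁
    subst h1; subst h2
    exact ⟨f w, f v, hfvw.symm, hbw'.1, hbv'.1, haw'.1, hav'.1, ho2, ho1⟩
end Red
lemma sat_to_ssat {V W : Type} [DecidableEq V] {H : SimpleGraph V} {lH : Sym2 V → ℝ}
    {G : SimpleGraph W} {lG : Sym2 W → ℝ}
    (h : SatMSat H lH G lG) : SsatMSat H lH G lG := by
  intro u v huv hna t ht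
  obtain ⟨f, fc⟩ := h.2 u v huv hna t ht
  by_cases hvia : ∃ e ∈ G.edgeSet, Sym2.map f e = s(u, v)
  · exact ⟨f, fc, hvia⟩
  · exfalso
    push_neg at hvia
    apply h.1
    obtain ⟨finj, fadj, ford⟩ := fc
    refine ⟨f, finj, ?_, ?_⟩
    · intro p q hpq
      have h2 := fadj p q hpq
      rw [SimpleGraph.sup_adj] at h2
      rcases h2 with h2 | h2
      · exact h2
      · rw [SimpleGraph.fromEdgeSet_adj] at h2
        exact absurd (Set.mem_singleton_iff.mp h2.1)
          (by rw [← Sym2.map_pair_eq]; exact hvia s(p, q) (G.mem_edgeSet.mpr hpq))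
    · intro e₁ he₁ e₂ he₂
      have := ford e₁ he₁ e₂ he₂
      simp only [if_neg (hvia e₁ he₁), if_neg (hvia e₂ he₂)] at this
      exact this

lemma sat_exists_aux {W : Type} (G : SimpleGraph W) (lG : Sym2 W → ℝ) {n : ℕ} :
    ∀ k : ℕ, ∀ H : SimpleGraph (Fin n), ∀ lH : Sym2 (Fin n) → ℝ,
      Set.InjOn lH H.edgeSet → ¬ EOContains H lH G lG →
      (Hᶜ.edgeSet.ncard ≤ k) →
      ∃ H' : SimpleGraph (Fin n), ∃ lH' : Sym2 (Fin n) → ℝ,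
        Set.InjOn lH' H'.edgeSet ∧ SatMSat H' lH' G lG := by
  intro k
  induction k with
  | zero =>
    intro H lH hinj hnc hcard
    refine ⟨H, lH, hinj, hnc, ?_⟩
    intro u v huv hna
    exfalso
    have : s(u, v) ∈ Hᶜ.edgeSet := by
      rw [SimpleGraph.mem_edgeSet, SimpleGraph.compl_adj]
      exact ⟨huv, hna⟩
    have hpos : 0 < Hᶜ.edgeSet.ncard :=
      (Set.ncard_pos (Set.toFinite _)).mpr ⟨_, this⟩
    omega
  | succ k ih =>
    intro H lH hinj hnc hcard
    by_cases hsat : SatMSat H lH G lG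
    · exact ⟨H, lH, hinj, hsat⟩
    · rw [SatMSat, not_and] at hsat
      have hsat2 := hsat hnc
      push_neg at hsat2
      obtain ⟨u, v, huv, hna, t, ht, hnc2⟩ := hsat2
      set H₂ := H ⊔ fromEdgeSet {s(u, v)} with hH₂
      set lH₂ : Sym2 (Fin n) → ℝ := fun e => if e = s(u, v) then t else lH e with hlH₂
      have hedge2 : H₂.edgeSet = H.edgeSet ∪ {s(u, v)} := by
        rw [hH₂, SimpleGraph.edgeSet_sup, SimpleGraph.edgeSet_fromEdgeSet]
        congr 1
        ext e
        simp only [Set.mem_diff, Set.mem_singleton_iff, Set.mem_setOf_eq]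
        constructor
        · exact fun h => h.1
        · rintro rfl
          exact ⟨rfl, by rw [Sym2.mem_diagSet, Sym2.mk_isDiag_iff]; exact huv⟩
      have hsuv : s(u, v) ∉ H.edgeSet := fun h => hna (H.mem_edgeSet.mp h)
      have hinj2 : Set.InjOn lH₂ H₂.edgeSet := by
        intro e₁ he₁ e₂ he₂ heq
        rw [hedge2] at he₁ he₂
        simp only [hlH₂] at heq
        rcases he₁ with he₁ | he₁ <;> rcases he₂ with he₂ | he₂
        · rw [if_neg (fun h : e₁ = s(u, v) => hsuv (h ▸ he₁)), if_neg (fun h : e₂ = s(u, v) => hsuv (h ▸ he₂))] at heq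
          exact hinj he₁ he₂ heq
        · rw [Set.mem_singleton_iff] at he₂
          rw [if_neg (fun h : e₁ = s(u, v) => hsuv (h ▸ he₁)), if_pos he₂] at heq
          exact absurd (heq ▸ ht _ he₁) (lt_irrefl _)
        · rw [Set.mem_singleton_iff] at he₁
          rw [if_pos he₁, if_neg (fun h : e₂ = s(u, v) => hsuv (h ▸ he₂))] at heq
          exact absurd (heq ▸ ht _ he₂) (lt_irrefl _)
        · rw [Set.mem_singleton_iff] at he₁ he₂
          rw [he₁, he₂]
      have hcompl : H₂ᶜ.edgeSet ⊂ Hᶜ.edgeSet := by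
        constructor
        · intro e he
          induction e using Sym2.ind with
          | _ x y =>
            rw [SimpleGraph.mem_edgeSet, SimpleGraph.compl_adj] at he ⊢
            refine ⟨he.1, fun h => he.2 ?_⟩
            rw [hH₂, SimpleGraph.sup_adj]
            exact Or.inl h
        · intro hsub
          have h1 : s(u, v) ∈ Hᶜ.edgeSet := by
            rw [SimpleGraph.mem_edgeSet, SimpleGraph.compl_adj]
            exact ⟨huv, hna⟩
          have h2 := hsub h1
          rw [SimpleGraph.mem_edgeSet, SimpleGraph.compl_adj] at h2
          apply h2.2
          rw [hH₂, SimpleGraph.sup_adj, SimpleGraph.fromEdgeSet_adj]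
          exact Or.inr ⟨rfl, huv⟩
      have hlt : H₂ᶜ.edgeSet.ncard < Hᶜ.edgeSet.ncard :=
        Set.ncard_lt_ncard hcompl (Hᶜ.edgeSet.toFinite)
      exact ih H₂ lH₂ hinj2 hnc2 (by omega)

lemma sat_exists {W : Type} (G : SimpleGraph W) (lG : Sym2 W → ℝ)
    {a b : W} (hab : G.Adj a b) (n : ℕ) :
    ∃ H' : SimpleGraph (Fin n), ∃ lH' : Sym2 (Fin n) → ℝ,
      Set.InjOn lH' H'.edgeSet ∧ SatMSat H' lH' G lG := by
  apply sat_exists_aux G lG ((⊥ : SimpleGraph (Fin n))ᶜ.edgeSet.ncard)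
    ⊥ (fun _ => 0)
  · rw [SimpleGraph.edgeSet_bot]
    exact fun x hx => absurd hx (Set.notMem_empty x)
  · rintro ⟨f, _, fadj, _⟩
    exact fadj a b hab
  · exact le_rfl

lemma exp16_le : Real.exp 16 ≤ 10 ^ 8 := by
  have h1 : Real.exp 1 ≤ 2.7182818286 := le_of_lt Real.exp_one_lt_d9
  have h2 : Real.exp 16 = (Real.exp 1) ^ (16 : ℕ) := by
    rw [← Real.exp_nat_mul]; norm_num
  calc Real.exp 16 = (Real.exp 1) ^ (16 : ℕ) := h2
    _ ≤ 2.7182818286 ^ (16 : ℕ) :=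
        pow_le_pow_left₀ (Real.exp_nonneg 1) h1 16
    _ ≤ 10 ^ 8 := by norm_num

lemma numeric_lemma : ∀ n : ℕ, 10 ^ 8 ≤ n → ∀ m : ℕ,
    (∀ d : ℕ, (d + 1) * n ≤ 2 * m + (d + 1) ^ 2 * 2 ^ (d * d)) →
    (1 / 8 : ℝ) * n * Real.sqrt (Real.log n) ≤ m := by
  intro n hn m hyp
  have hn0 : (0 : ℝ) < n := by
    have : (10 : ℕ) ^ 8 ≤ n := hn
    have : (10 : ℝ) ^ 8 ≤ (n : ℝ) := by exact_mod_cast this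
    linarith
  set L := Real.log n with hL
  have hL16 : 16 ≤ L := by
    rw [hL, Real.le_log_iff_exp_le hn0]
    calc Real.exp 16 ≤ 10 ^ 8 := exp16_le
      _ ≤ (n : ℝ) := by exact_mod_cast hn
  have hL0 : (0 : ℝ) ≤ L := by linarith
  have hsqL4 : 4 ≤ Real.sqrt L := by
    rw [show (4 : ℝ) = Real.sqrt 16 by
      rw [show (16 : ℝ) = 4 ^ 2 by norm_num, Real.sqrt_sq]; norm_num]
    exact Real.sqrt_le_sqrt hL16
  have hsqL : Real.sqrt L ≤ L / 4 := by
    have h := Real.sq_sqrt hL0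
    nlinarith [Real.sqrt_nonneg L]
  set d := ⌊Real.sqrt L / 2⌋₊ with hd
  have hd1 : (d : ℝ) ≤ Real.sqrt L / 2 := Nat.floor_le (by positivity)
  have hd2 : Real.sqrt L / 2 < (d : ℝ) + 1 := Nat.lt_floor_add_one _
  -- bound the error term
  have hA1 : (2 : ℝ) ^ (d * d) ≤ Real.exp (L / 4) := by
    have hdd : ((d * d : ℕ) : ℝ) ≤ L / 4 := by
      push_cast
      nlinarith [Real.sq_sqrt hL0, hd1, Nat.cast_nonneg (α := ℝ) d]
    have : (2 : ℝ) ^ (d * d) = Real.exp (Real.log 2 * (d * d : ℕ)) := by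
      rw [← Real.rpow_natCast 2 (d * d), Real.rpow_def_of_pos (by norm_num)]
    rw [this]
    apply Real.exp_le_exp.mpr
    have hlog2 : Real.log 2 ≤ 1 := le_of_lt (lt_trans Real.log_two_lt_d9 (by norm_num))
    have hddnn : (0:ℝ) ≤ ((d * d : ℕ) : ℝ) := Nat.cast_nonneg _
    calc Real.log 2 * ((d * d : ℕ) : ℝ) ≤ 1 * ((d * d : ℕ) : ℝ) :=
          mul_le_mul_of_nonneg_right hlog2 hddnn
      _ = ((d * d : ℕ) : ℝ) := one_mul _
      _ ≤ L / 4 := hdd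
  have hA2 : ((d : ℝ) + 1) ≤ Real.exp (Real.sqrt L) := by
    calc ((d : ℝ) + 1) ≤ Real.sqrt L / 2 + 1 := by linarith
      _ ≤ Real.sqrt L + 1 := by
          have := Real.sqrt_nonneg L; linarith
      _ ≤ Real.exp (Real.sqrt L) := Real.add_one_le_exp _
  have hE : ((d : ℝ) + 1) * 2 ^ (d * d) ≤ (n : ℝ) / 2 := by
    calc ((d : ℝ) + 1) * 2 ^ (d * d)
        ≤ Real.exp (Real.sqrt L) * Real.exp (L / 4) := by
          apply mul_le_mul hA2 hA1 (by positivity) (Real.exp_nonneg _)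
      _ = Real.exp (Real.sqrt L + L / 4) := (Real.exp_add _ _).symm
      _ ≤ Real.exp (L / 2) := by
          apply Real.exp_le_exp.mpr; linarith
      _ ≤ Real.exp (L - Real.log 2) := by
          apply Real.exp_le_exp.mpr
          have hlog2 : Real.log 2 ≤ 1 := le_of_lt (lt_trans Real.log_two_lt_d9 (by norm_num))
          linarith
      _ = (n : ℝ) / 2 := by
          rw [Real.exp_sub, Real.exp_log hn0, Real.exp_log (by norm_num : (0:ℝ) < 2)]
  -- main chain
  have hmain := hyp d
  have hmainR : ((d : ℝ) + 1) * n ≤ 2 * m + ((d : ℝ) + 1) ^ 2 * 2 ^ (d * d) := by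
    exact_mod_cast hmain
  have hsq : ((d : ℝ) + 1) ^ 2 * 2 ^ (d * d) ≤ ((d : ℝ) + 1) * ((n : ℝ) / 2) := by
    have hd0 : (0 : ℝ) ≤ (d : ℝ) + 1 := by positivity
    calc ((d : ℝ) + 1) ^ 2 * 2 ^ (d * d) = ((d : ℝ) + 1) * (((d : ℝ) + 1) * 2 ^ (d * d)) := by
          ring
      _ ≤ ((d : ℝ) + 1) * ((n : ℝ) / 2) := mul_le_mul_of_nonneg_left hE hd0
  have h2m : ((d : ℝ) + 1) * (n : ℝ) / 2 ≤ 2 * m := by linarith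
  have hfin : Real.sqrt L / 2 * (n : ℝ) / 2 ≤ 2 * m := by
    calc Real.sqrt L / 2 * (n : ℝ) / 2 ≤ ((d : ℝ) + 1) * (n : ℝ) / 2 := by
          have : Real.sqrt L / 2 ≤ (d : ℝ) + 1 := le_of_lt hd2
          nlinarith
      _ ≤ 2 * m := h2m
  calc (1 / 8 : ℝ) * n * Real.sqrt (Real.log n) = Real.sqrt L / 2 * n / 2 / 2 := by
        rw [← hL]; ring
    _ ≤ 2 * m / 2 := by linarith
    _ = m := by ring

end AuxLemmas

/-- if the minimal edge of `G` is `ab` and there are common neighbors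
`v, w` of `a` and `b` with `l(av) < l(aw)` and `l(bv) > l(bw)`, then
`ssat_m(n,G) = Ω(n√(log n))` and `sat_m(n,G) = Ω(n√(log n))`. -/
theorem stmt8 {W : Type} (G : SimpleGraph W) (lG : Sym2 W → ℝ)
    (hinj : Set.InjOn lG G.edgeSet) (a b v w : W) (hab : G.Adj a b)
    (hmin : ∀ e ∈ G.edgeSet, e ≠ s(a, b) → lG s(a, b) < lG e)
    (hav : G.Adj a v) (haw : G.Adj a w) (hbv : G.Adj b v) (hbw : G.Adj b w)
    (hord1 : lG s(a, v) < lG s(a, w)) (hord2 : lG s(b, w) < lG s(b, v)) :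
    (∃ c : ℝ, 0 < c ∧ ∃ N : ℕ, ∀ n ≥ N,
        c * n * Real.sqrt (Real.log n) ≤ (ssatM G lG n : ℝ)) ∧
    (∃ c : ℝ, 0 < c ∧ ∃ N : ℕ, ∀ n ≥ N,
        c * n * Real.sqrt (Real.log n) ≤ (satM G lG n : ℝ)) := by
  have main : ∀ n : ℕ, 10 ^ 8 ≤ n → ∀ (H : SimpleGraph (Fin n)) (lH : Sym2 (Fin n) → ℝ),
      SsatMSat H lH G lG → (1 / 8 : ℝ) * n * Real.sqrt (Real.log n) ≤ H.edgeSet.ncard := by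
    intro n hn H lH hss
    classical
    letI : DecidableRel H.Adj := Classical.decRel _
    have hcross := ssat_cross G lG H lH a b v w hab hmin hav haw hbv hbw hord1 hord2 hss
    have hbound := crossBound H lH hcross
    apply numeric_lemma n hn
    intro d
    have hb := hbound d
    have hcard : H.edgeSet.ncard = H.edgeFinset.card := by
      rw [Set.ncard_eq_toFinset_card']
      congr 1
    rw [hcard]
    exact hb
  constructor
  · refine ⟨1 / 8, by norm_num, 10 ^ 8, fun n hn => ?_⟩
    obtain ⟨H0, lH0, hinj0, hsat0⟩ := sat_exists G lG hab n
    have hne : {m | ∃ (H : SimpleGraph (Fin n)) (lH : Sym2 (Fin n) → ℝ),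
        Set.InjOn lH H.edgeSet ∧ SsatMSat H lH G lG ∧ H.edgeSet.ncard = m}.Nonempty :=
      ⟨H0.edgeSet.ncard, H0, lH0, hinj0, sat_to_ssat hsat0, rfl⟩
    obtain ⟨H1, lH1, _, hss1, hcard1⟩ := Nat.sInf_mem hne
    have heq : ssatM G lG n = H1.edgeSet.ncard := hcard1.symm
    rw [heq]
    exact main n hn H1 lH1 hss1
  · refine ⟨1 / 8, by norm_num, 10 ^ 8, fun n hn => ?_⟩
    obtain ⟨H0, lH0, hinj0, hsat0⟩ := sat_exists G lG hab n
    have hne : {m | ∃ (H : SimpleGraph (Fin n)) (lH : Sym2 (Fin n) → ℝ),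
        Set.InjOn lH H.edgeSet ∧ SatMSat H lH G lG ∧ H.edgeSet.ncard = m}.Nonempty :=
      ⟨H0.edgeSet.ncard, H0, lH0, hinj0, hsat0, rfl⟩
    obtain ⟨H1, lH1, _, hsat1, hcard1⟩ := Nat.sInf_mem hne
    have heq : satM G lG n = H1.edgeSet.ncard := hcard1.symm
    rw [heq]
    exact main n hn H1 lH1 (sat_to_ssat hsat1)
end

section
/- Let P_k be an edge-ordered path on vertices u_1,…,u_k with k ≥ 4 such that neither u_2u_3 nor u_{k−2}u_{k−1} is the minimal edge of P_k. Then sat_m(n, P_k) = Θ(n). -/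
open SimpleGraph

namespace Stmt14

/-- transfer of an EO-copy along a supergraph with order-compatible labels -/
theorem transfer {V W : Type} {G : SimpleGraph W} {lG : Sym2 W → ℝ}
    {H H' : SimpleGraph V} {lH lH' : Sym2 V → ℝ} (hsub : H ≤ H')
    (hord : ∀ e₁ ∈ H.edgeSet, ∀ e₂ ∈ H.edgeSet, (lH e₁ < lH e₂ ↔ lH' e₁ < lH' e₂)) :
    EOContains H lH G lG → EOContains H' lH' G lG := by
  rintro ⟨f, hinj, hadj, hordc⟩
  have hmem : ∀ e ∈ G.edgeSet, Sym2.map f e ∈ H.edgeSet := by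
    intro e he
    induction e with
    | _ x y => exact (mem_edgeSet H).2 (hadj x y ((mem_edgeSet G).1 he))
  exact ⟨f, hinj, fun u v h => hsub (hadj u v h),
    fun e₁ h₁ e₂ h₂ => (hordc e₁ h₁ e₂ h₂).trans (hord _ (hmem e₁ h₁) _ (hmem e₂ h₂))⟩

theorem exists_valid_t {V : Type} (S : Set (Sym2 V)) (hS : S.Finite) (lH : Sym2 V → ℝ) :
    ∃ t : ℝ, ∀ e ∈ S, t < lH e := by
  obtain ⟨t, ht⟩ := (hS.image lH).bddBelow
  refine ⟨t - 1, fun e he => ?_⟩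
  have := ht ⟨e, he, rfl⟩
  linarith

variable {n k : ℕ}

def creates (H : SimpleGraph (Fin n)) (lH : Sym2 (Fin n) → ℝ)
    (G : SimpleGraph (Fin k)) (lG : Sym2 (Fin k) → ℝ) (e : Sym2 (Fin n)) : Prop :=
  ∀ t : ℝ, (∀ e' ∈ H.edgeSet, t < lH e') →
    EOContains (H ⊔ fromEdgeSet {e}) (fun e' => if e' = e then t else lH e') G lG

def Bset (H : SimpleGraph (Fin n)) (lH : Sym2 (Fin n) → ℝ)
    (G : SimpleGraph (Fin k)) (lG : Sym2 (Fin k) → ℝ) : Set (Sym2 (Fin n)) :=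
  {e | e ∈ Hᶜ.edgeSet ∧ ¬ creates H lH G lG e}

theorem edgeSet_sup_single {H : SimpleGraph (Fin n)} {e : Sym2 (Fin n)} (he : ¬ e.IsDiag) :
    (H ⊔ fromEdgeSet {e}).edgeSet = insert e H.edgeSet := by
  rw [edgeSet_sup, edgeSet_fromEdgeSet]
  ext e'
  simp only [Set.mem_union, Set.mem_diff, Set.mem_singleton_iff, Set.mem_insert_iff,
    Set.mem_setOf_eq]
  constructor
  · rintro (h | ⟨rfl, _⟩)
    · exact Or.inr h
    · exact Or.inl rfl
  · rintro (rfl | h)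
    · exact Or.inr ⟨rfl, he⟩
    · exact Or.inl h

theorem notAdj_of_compl_edge {H : SimpleGraph (Fin n)} {x y : Fin n}
    (h : s(x, y) ∈ Hᶜ.edgeSet) : x ≠ y ∧ ¬ H.Adj x y :=
  (compl_adj H x y).1 (Hᶜ.mem_edgeSet.1 h)

theorem sat_of_empty {G : SimpleGraph (Fin k)} {lG : Sym2 (Fin k) → ℝ}
    {H : SimpleGraph (Fin n)} {lH : Sym2 (Fin n) → ℝ}
    (hnc : ¬ EOContains H lH G lG) (hB : Bset H lH G lG = ∅) : SatMSat H lH G lG := by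
  refine ⟨hnc, fun u v huv hadj t ht => ?_⟩
  have hne : s(u, v) ∉ Bset H lH G lG := by rw [hB]; exact Set.notMem_empty _
  have hcr : creates H lH G lG s(u, v) := by
    by_contra hc
    exact hne ⟨(Hᶜ.mem_edgeSet).2 ((compl_adj H u v).2 ⟨huv, hadj⟩), hc⟩
  exact hcr t ht

/-- the greedy saturation process -/
theorem greedy (G : SimpleGraph (Fin k)) (lG : Sym2 (Fin k) → ℝ) :
    ∀ (D : ℕ) (H : SimpleGraph (Fin n)) (lH : Sym2 (Fin n) → ℝ),
      Set.InjOn lH H.edgeSet → ¬ EOContains H lH G lG → (Bset H lH G lG).ncard ≤ D →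
      ∃ (H' : SimpleGraph (Fin n)) (lH' : Sym2 (Fin n) → ℝ),
        Set.InjOn lH' H'.edgeSet ∧ SatMSat H' lH' G lG ∧
        H'.edgeSet.ncard ≤ H.edgeSet.ncard + D := by
  intro D
  induction D with
  | zero =>
    intro H lH hinj hnc hB
    have hBempty : Bset H lH G lG = ∅ := by
      rw [← Set.ncard_eq_zero (Set.toFinite _)]; omega
    exact ⟨H, lH, hinj, sat_of_empty hnc hBempty, le_refl _⟩
  | succ D ih =>
    intro H lH hinj hnc hB
    by_cases hBe : Bset H lH G lG = ∅
    · exact ⟨H, lH, hinj, sat_of_empty hnc hBe, by omega⟩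
    obtain ⟨e, heB⟩ := Set.nonempty_iff_ne_empty.2 hBe
    obtain ⟨heC, hecr⟩ := heB
    have hediag : ¬ e.IsDiag := fun hd => (not_isDiag_of_mem_edgeSet (G := _) heC) hd
    have heH : e ∉ H.edgeSet := by
      induction e with
      | _ x y => exact fun hmem => (notAdj_of_compl_edge heC).2 (H.mem_edgeSet.1 hmem)
    obtain ⟨t₀, ht₀⟩ := exists_valid_t H.edgeSet (Set.toFinite _) lH
    set H₁ := H ⊔ fromEdgeSet {e} with hH₁
    set lH₁ : Sym2 (Fin n) → ℝ := fun e' => if e' = e then t₀ else lH e' with hlH₁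
    have hE₁ : H₁.edgeSet = insert e H.edgeSet := edgeSet_sup_single hediag
    have hlag : ∀ e' ∈ H.edgeSet, lH₁ e' = lH e' := by
      intro e' he'
      simp only [hlH₁]
      rw [if_neg]; rintro rfl; exact heH he'
    -- order-compatibility of two fresh-minimal labelings of H₁
    have hordgen : ∀ (s s' : ℝ), (∀ e' ∈ H.edgeSet, s < lH e') → (∀ e' ∈ H.edgeSet, s' < lH e') →
        ∀ e₁ ∈ H₁.edgeSet, ∀ e₂ ∈ H₁.edgeSet,
          ((if e₁ = e then s else lH e₁) < (if e₂ = e then s else lH e₂) ↔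
           (if e₁ = e then s' else lH e₁) < (if e₂ = e then s' else lH e₂)) := by
      intro s s' hs hs' e₁ h₁ e₂ h₂
      rw [hE₁] at h₁ h₂
      split_ifs with hq1 hq2 hq2
      · exact iff_of_false (lt_irrefl _) (lt_irrefl _)
      · have h₂' := (Set.mem_insert_iff.1 h₂).resolve_left hq2
        exact iff_of_true (hs _ h₂') (hs' _ h₂')
      · have h₁' := (Set.mem_insert_iff.1 h₁).resolve_left hq1
        exact iff_of_false (fun hlt => absurd (hs _ h₁') (not_lt.2 hlt.le))
          (fun hlt => absurd (hs' _ h₁') (not_lt.2 hlt.le))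
      · exact Iff.rfl
    have hnc₁ : ¬ EOContains H₁ lH₁ G lG := by
      unfold creates at hecr
      push_neg at hecr
      obtain ⟨t, htv, hnt⟩ := hecr
      intro hcon
      exact hnt (transfer (le_refl _) (hordgen t₀ t ht₀ htv) hcon)
    have hinj₁ : Set.InjOn lH₁ H₁.edgeSet := by
      rw [hE₁]
      intro e₁ h₁ e₂ h₂ heq
      simp only [hlH₁] at heq
      split_ifs at heq with hq1 hq2 hq2
      · rw [hq1, hq2]
      · have h₂' := (Set.mem_insert_iff.1 h₂).resolve_left hq2
        exact absurd (ht₀ _ h₂') (by rw [← heq]; exact lt_irrefl _)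
      · have h₁' := (Set.mem_insert_iff.1 h₁).resolve_left hq1
        exact absurd (ht₀ _ h₁') (by rw [heq]; exact lt_irrefl _)
      · exact hinj ((Set.mem_insert_iff.1 h₁).resolve_left hq1)
          ((Set.mem_insert_iff.1 h₂).resolve_left hq2) heq
    have hBsub : Bset H₁ lH₁ G lG ⊆ Bset H lH G lG \ {e} := by
      rintro e' ⟨he'C, he'cr⟩
      have he'H₁ : e' ∉ H₁.edgeSet := by
        induction e' with
        | _ x y => exact fun hmem => (notAdj_of_compl_edge he'C).2 (H₁.mem_edgeSet.1 hmem)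
      have he'ne : e' ≠ e := fun hq => he'H₁ (by rw [hE₁, hq]; exact Set.mem_insert _ _)
      have he'diag : ¬ e'.IsDiag := fun hd => (not_isDiag_of_mem_edgeSet (G := _) he'C) hd
      have he'C0 : e' ∈ Hᶜ.edgeSet := by
        induction e' with
        | _ x y =>
          have h2 := (compl_adj H₁ x y).1 (H₁ᶜ.mem_edgeSet.1 he'C)
          exact Hᶜ.mem_edgeSet.2 ((compl_adj H x y).2
            ⟨h2.1, fun ha => h2.2 ((sup_adj H (fromEdgeSet {e}) x y).2 (Or.inl ha))⟩)
      have hnotmem : e' ∉ H.edgeSet := by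
        induction e' with
        | _ x y => exact fun hmem => (notAdj_of_compl_edge he'C0).2 (H.mem_edgeSet.1 hmem)
      have hmain : ¬ creates H lH G lG e' := by
        intro hcr
        refine he'cr ?_
        intro t htv
        have htvH : ∀ e'' ∈ H.edgeSet, t < lH e'' := by
          intro e'' he''
          have := htv e'' (by rw [hE₁]; exact Set.mem_insert_of_mem _ he'')
          rwa [hlag e'' he''] at this
        refine transfer (sup_le_sup_right le_sup_left _) ?_ (hcr t htvH)
        intro e₁ h₁ e₂ h₂
        have hmm : ∀ e₃ ∈ (H ⊔ fromEdgeSet {e'}).edgeSet,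
            (if e₃ = e' then t else lH e₃) = (if e₃ = e' then t else lH₁ e₃) := by
          intro e₃ h₃
          rw [edgeSet_sup_single he'diag] at h₃
          rcases h₃ with rfl | h₃
          · rw [if_pos rfl, if_pos rfl]
          · have hne3 : e₃ ≠ e' := fun hq => hnotmem (hq ▸ h₃)
            rw [if_neg hne3, if_neg hne3, hlag _ h₃]
        show ((if e₁ = e' then t else lH e₁) < (if e₂ = e' then t else lH e₂)) ↔
          ((if e₁ = e' then t else lH₁ e₁) < (if e₂ = e' then t else lH₁ e₂))
        rw [hmm e₁ h₁, hmm e₂ h₂]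
      exact ⟨⟨he'C0, hmain⟩, he'ne⟩
    have hBcard : (Bset H₁ lH₁ G lG).ncard ≤ D := by
      have h2 := Set.ncard_diff_singleton_lt_of_mem (show e ∈ Bset H lH G lG from ⟨heC, hecr⟩) (Set.toFinite _)
      have h3 := Set.ncard_le_ncard hBsub (Set.toFinite _)
      omega
    obtain ⟨H', lH', h1, h2, h3⟩ := ih H₁ lH₁ hinj₁ hnc₁ hBcard
    refine ⟨H', lH', h1, h2, ?_⟩
    have : H₁.edgeSet.ncard = H.edgeSet.ncard + 1 := by
      rw [hE₁, Set.ncard_insert_of_notMem heH (Set.toFinite _)]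
    omega

theorem path_edge_rep {e : Sym2 (Fin k)} (he : e ∈ (pathGraph k).edgeSet) :
    ∃ (i : ℕ) (h1 : i + 1 < k), e = s((⟨i, by omega⟩ : Fin k), (⟨i + 1, h1⟩ : Fin k)) := by
  induction e with
  | _ x y =>
    have hadj := (pathGraph k).mem_edgeSet.1 he
    rw [pathGraph_adj] at hadj
    rcases hadj with h | h
    · exact ⟨x.val, by omega, by rw [Sym2.eq_iff]; left; constructor <;> ext <;> simp [h]⟩
    · exact ⟨y.val, by omega, by rw [Sym2.eq_iff]; right; constructor <;> ext <;> simp [h]⟩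

/-- In a sat_m-saturating graph there are no two isolated vertices. -/
theorem no_two_isolated (hk : 4 ≤ k) {G : SimpleGraph (Fin k)} {lG : Sym2 (Fin k) → ℝ}
    {H : SimpleGraph (Fin n)} {lH : Sym2 (Fin n) → ℝ}
    (hG : G = pathGraph k) (hsat : SatMSat H lH G lG) :
    Set.Subsingleton {x : Fin n | ∀ w, ¬ H.Adj x w} := by
  intro x hx y hy
  by_contra hxy
  obtain ⟨t, ht⟩ := exists_valid_t H.edgeSet (Set.toFinite _) lH
  obtain ⟨f, hinj, hadj, hord⟩ := hsat.2 x y hxy (hx y) t ht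
  have hxyE : s(x, y) ∉ H.edgeSet := fun hm => hx y (H.mem_edgeSet.1 hm)
  by_cases hc : ∀ a b : Fin k, G.Adj a b → H.Adj (f a) (f b)
  · refine hsat.1 ⟨f, hinj, hc, fun e₁ h₁ e₂ h₂ => (hord e₁ h₁ e₂ h₂).trans ?_⟩
    have heq : ∀ e ∈ G.edgeSet, (if Sym2.map f e = s(x, y) then t else lH (Sym2.map f e))
        = lH (Sym2.map f e) := by
      intro e heG
      rw [if_neg]
      intro hq
      refine hxyE ?_
      rw [← hq]
      induction e with
      | _ a b => exact H.mem_edgeSet.2 (hc a b (G.mem_edgeSet.1 heG))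
    simp only [heq e₁ h₁, heq e₂ h₂]
  · push_neg at hc
    obtain ⟨a, b, hab, hnab⟩ := hc
    have h₁ := hadj a b hab
    rw [sup_adj] at h₁
    rcases h₁ with h₁ | h₁
    · exact hnab h₁
    rw [fromEdgeSet_adj] at h₁
    rw [hG, pathGraph_adj] at hab
    have hintr : ∃ c : Fin k, 0 < c.val ∧ c.val + 1 < k ∧ (c = a ∨ c = b) := by
      rcases hab with h | h
      · by_cases ha : 0 < a.val
        · exact ⟨a, ha, by omega, Or.inl rfl⟩
        · refine ⟨b, by omega, by omega, Or.inr rfl⟩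
      · by_cases hb : 0 < b.val
        · exact ⟨b, hb, by omega, Or.inr rfl⟩
        · refine ⟨a, by omega, by omega, Or.inl rfl⟩
    obtain ⟨c, hc0, hc1, hcab⟩ := hintr
    have hfc : f c = x ∨ f c = y := by
      have h3 := h₁.1
      rw [Set.mem_singleton_iff, Sym2.eq_iff] at h3
      rcases hcab with rfl | rfl
      · rcases h3 with ⟨h, _⟩ | ⟨h, _⟩
        · exact Or.inl h
        · exact Or.inr h
      · rcases h3 with ⟨_, h⟩ | ⟨_, h⟩
        · exact Or.inr h
        · exact Or.inl h
    -- c has two distinct pattern-neighbours c-1 and c+1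
    set cm : Fin k := ⟨c.val - 1, by omega⟩ with hcm
    set cp : Fin k := ⟨c.val + 1, by omega⟩ with hcp
    have hadjm : G.Adj cm c := by rw [hG, pathGraph_adj]; left; simp [hcm]; omega
    have hadjp : G.Adj c cp := by rw [hG, pathGraph_adj]; left; simp [hcp]
    have key : ∀ d : Fin k, G.Adj c d → f d = (if f c = x then y else x) := by
      intro d hd
      have h2 := hadj c d hd
      rw [sup_adj] at h2
      rcases h2 with h2 | h2
      · rcases hfc with hcx | hcy
        · rw [hcx] at h2; exact absurd h2 (hx _)
        · rw [hcy] at h2; exact absurd h2 (hy _)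
      · rw [fromEdgeSet_adj, Set.mem_singleton_iff, Sym2.eq_iff] at h2
        rcases hfc with hcx | hcy
        · rw [if_pos hcx]
          rcases h2.1 with ⟨h3, h4⟩ | ⟨h3, h4⟩
          · exact h4
          · exact absurd (hcx.symm.trans h3) hxy
        · rw [if_neg (by rw [hcy]; exact Ne.symm hxy)]
          rcases h2.1 with ⟨h3, h4⟩ | ⟨h3, h4⟩
          · exact absurd (hcy.symm.trans h3).symm hxy
          · exact h4
    have e1 := key cm hadjm.symm
    have e2 := key cp hadjp
    have : cm = cp := hinj (by rw [e1, e2])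
    rw [hcm, hcp, Fin.mk.injEq] at this
    omega

/-- A graph with at most one isolated vertex has at least (n-1)/2 edges. -/
theorem count_from_isolated {H : SimpleGraph (Fin n)}
    (h1 : Set.Subsingleton {x : Fin n | ∀ w, ¬ H.Adj x w}) :
    n ≤ 2 * H.edgeSet.ncard + 1 := by
  classical
  set I : Finset (Fin n) := Finset.univ.filter (fun x => ∀ w, ¬ H.Adj x w) with hI
  have hIcard : I.card ≤ 1 := by
    refine Finset.card_le_one.2 (fun a ha b hb => ?_)
    rw [hI, Finset.mem_filter] at ha hb
    exact h1 ha.2 hb.2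
  -- each non-isolated vertex has an incident edge
  have hpick : ∀ x : Fin n, x ∉ I → ∃ w, H.Adj x w := by
    intro x hx
    rw [hI, Finset.mem_filter] at hx
    push_neg at hx
    exact hx (Finset.mem_univ x)
  set F : Fin n → Sym2 (Fin n) := fun x =>
    if h : ∃ w, H.Adj x w then s(x, Classical.choose h) else s(x, x) with hF
  have hFmem : ∀ x ∉ I, F x ∈ H.edgeFinset ∧ x ∈ F x := by
    intro x hx
    obtain ⟨w, hw⟩ := hpick x hx
    simp only [hF]
    rw [dif_pos (⟨w, hw⟩ : ∃ w, H.Adj x w)]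
    exact ⟨by rw [mem_edgeFinset]; exact H.mem_edgeSet.2 (Classical.choose_spec ⟨w, hw⟩),
      Sym2.mem_mk_left _ _⟩
  have hcount : (Finset.univ.filter (fun x => x ∉ I)).card ≤ 2 * H.edgeFinset.card := by
    have := Finset.card_le_mul_card_image (f := F) (Finset.univ.filter (fun x => x ∉ I)) 2 ?_
    · refine le_trans this (Nat.mul_le_mul_left 2 (Finset.card_le_card ?_))
      intro e he
      rw [Finset.mem_image] at he
      obtain ⟨x, hx, rfl⟩ := he
      exact (hFmem x (Finset.mem_filter.1 hx).2).1
    · intro e he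
      induction e with
      | _ a b =>
        have hsub : (Finset.univ.filter (fun x => x ∉ I)).filter (fun x => F x = s(a, b)) ⊆
            ({a, b} : Finset (Fin n)) := by
          intro x hx
          rw [Finset.mem_filter] at hx
          have hmem : x ∈ F x := (hFmem x (Finset.mem_filter.1 hx.1).2).2
          rw [hx.2, Sym2.mem_iff] at hmem
          simp only [Finset.mem_insert, Finset.mem_singleton]
          exact hmem
        exact le_trans (Finset.card_le_card hsub)
          (le_trans (Finset.card_insert_le _ _) (by simp))
  have htotal : I.card + (Finset.univ.filter (fun x => x ∉ I)).card = n := by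
    have h4 : Finset.univ.filter (fun x => x ∈ I) = I := by ext x; simp
    have h5 := Finset.card_filter_add_card_filter_not (s := (Finset.univ : Finset (Fin n)))
      (p := fun x => x ∈ I)
    rw [h4] at h5
    simpa using h5
  have hEF : H.edgeFinset.card = H.edgeSet.ncard := by
    rw [← coe_edgeFinset, Set.ncard_coe_finset]
  omega

/-! ### The seed construction -/

/-- level of a vertex: stem levels `0..j-1`, chain levels `j+1..k-2`, leaves at level `j` -/
def lev (n k j : ℕ) (x : Fin n) : ℕ :=
  if x.val < j then x.val else if x.val < k - 2 then x.val + 1 else j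

/-- the seed graph: a "double broom" -/
def seed (n k j : ℕ) : SimpleGraph (Fin n) :=
  fromRel (fun x y => lev n k j x + 1 = lev n k j y)

theorem lev_le {j : ℕ} (hj : j + 1 < k) (x : Fin n) : lev n k j x ≤ k - 2 := by
  unfold lev
  split_ifs <;> omega

theorem lev_eq_j_iff {j : ℕ} (hj : j + 1 < k) (x : Fin n) :
    lev n k j x = j ↔ k - 2 ≤ x.val := by
  unfold lev
  split_ifs <;> omega

theorem core_inj {j : ℕ} (hj : j + 1 < k) {x y : Fin n}
    (hx : lev n k j x ≠ j) (hy : lev n k j y ≠ j) (heq : lev n k j x = lev n k j y) : x = y := by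
  rw [Ne, lev_eq_j_iff hj] at hx hy
  unfold lev at heq
  have := x.isLt
  have := y.isLt
  refine Fin.ext ?_
  split_ifs at heq <;> omega

/-- The seed graph contains no path on `k` vertices. -/
theorem seed_adj {j : ℕ} {x y : Fin n} :
    (seed n k j).Adj x y ↔ x ≠ y ∧ (lev n k j x + 1 = lev n k j y ∨ lev n k j y + 1 = lev n k j x) :=
  fromRel_adj _ x y

/-- The seed graph contains no path on `k` vertices. -/
theorem seed_avoid {j : ℕ} (hk : 4 ≤ k) (hj : j + 1 < k) (hj1 : j ≠ 1) (hj3 : j ≠ k - 3)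
    (f : Fin k → Fin n) (hfinj : Function.Injective f)
    (hadj : ∀ a b : Fin k, (pathGraph k).Adj a b → (seed n k j).Adj (f a) (f b)) : False := by
  have hk0 : 0 < k := by omega
  set F : ℕ → Fin n := fun i => f ⟨i % k, Nat.mod_lt i hk0⟩ with hF
  set G : ℕ → ℕ := fun i => lev n k j (F i) with hG
  have step : ∀ i : ℕ, i + 1 < k → (G (i + 1) = G i + 1 ∨ G i = G (i + 1) + 1) := by
    intro i h
    have e1 : i % k = i := Nat.mod_eq_of_lt (by omega)
    have e2 : (i + 1) % k = i + 1 := Nat.mod_eq_of_lt h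
    have hpg : (pathGraph k).Adj ⟨i % k, Nat.mod_lt i hk0⟩ ⟨(i + 1) % k, Nat.mod_lt (i+1) hk0⟩ := by
      rw [pathGraph_adj]
      left
      simp only []
      omega
    have hadj' := hadj _ _ hpg
    rw [seed_adj] at hadj'
    rcases hadj'.2 with h1 | h1
    · exact Or.inl h1.symm
    · exact Or.inr h1.symm
  have C1 : ∀ p q : ℕ, p < k → q < k → G p = G q → G p ≠ j → p = q := by
    intro p q hp hq heq hne
    have hy : G q ≠ j := by omega
    have := hfinj (core_inj hj hne hy heq)
    rw [Fin.mk.injEq] at this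
    rw [Nat.mod_eq_of_lt hp, Nat.mod_eq_of_lt hq] at this
    exact this
  have glb : ∀ i : ℕ, G i ≤ k - 2 := fun i => lev_le hj (F i)
  -- no interior position has level 0
  have U1 : ∀ i : ℕ, 0 < i → i + 1 < k → G i = 0 → False := by
    intro i h0 h1 hgi
    have s1 := step (i - 1) (by omega)
    rw [Nat.sub_add_cancel (by omega)] at s1
    have s2 := step i h1
    have hm : G (i - 1) = 1 := by omega
    have hp : G (i + 1) = 1 := by omega
    have := C1 (i - 1) (i + 1) (by omega) (by omega) (by omega) (by omega)
    omega
  -- no interior position has level k-2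
  have U2 : ∀ i : ℕ, 0 < i → i + 1 < k → G i = k - 2 → False := by
    intro i h0 h1 hgi
    have s1 := step (i - 1) (by omega)
    rw [Nat.sub_add_cancel (by omega)] at s1
    have s2 := step i h1
    have hb1 := glb (i - 1)
    have hb2 := glb (i + 1)
    have hm : G (i - 1) = k - 3 := by omega
    have hp : G (i + 1) = k - 3 := by omega
    have := C1 (i - 1) (i + 1) (by omega) (by omega) (by omega) (by omega)
    omega
  -- at most one interior position has level j (the leaf level)
  have UL : ∀ p q : ℕ, 0 < p → p + 1 < k → 0 < q → q + 1 < k →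
      G p = j → G q = j → p = q := by
    have main : ∀ p q : ℕ, 0 < p → p + 1 < k → q + 1 < k → p < q →
        G p = j → G q = j → False := by
      intro p q hp0 hp1 hq1 hpq hgp hgq
      have hgap : p + 1 < q := by
        rcases Nat.lt_or_ge (p + 1) q with h | h
        · exact h
        · have heq : q = p + 1 := by omega
          subst heq
          have := step p (by omega)
          omega
      have sA := step (p - 1) (by omega)
      rw [Nat.sub_add_cancel (by omega)] at sA
      have sB := step p (by omega)
      have sC := step q (by omega)
      have h3 : (G (p-1) = G (p+1) ∨ G (p-1) = G (q+1) ∨ G (p+1) = G (q+1)) ∧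
          G (p-1) ≠ j ∧ G (p+1) ≠ j := by
        constructor
        · omega
        · omega
      rcases h3.1 with h | h | h
      · have := C1 (p-1) (p+1) (by omega) (by omega) h h3.2.1
        omega
      · have := C1 (p-1) (q+1) (by omega) (by omega) h h3.2.1
        omega
      · have := C1 (p+1) (q+1) (by omega) (by omega) h h3.2.2
        omega
    intro p q hp0 hp1 hq0 hq1 hgp hgq
    rcases Nat.lt_trichotomy p q with h | h | h
    · exact absurd (main p q hp0 hp1 hq1 h hgp hgq) not_false
    · exact h
    · exact absurd (main q p hq0 hq1 hp1 h hgq hgp) not_false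
  -- bounds for interior levels
  have hbdd : ∀ i : ℕ, 0 < i → i + 1 < k → 1 ≤ G i ∧ G i ≤ k - 3 := by
    intro i h0 h1
    have b1 := glb i
    have b2 : G i ≠ 0 := fun hq => U1 i h0 h1 hq
    have b3 : G i ≠ k - 2 := fun hq => U2 i h0 h1 hq
    omega
  -- injection from the k-2 interior positions into the k-3 possible levels
  have hemb : Function.Injective (fun i : Fin (k - 2) =>
      (⟨G (i.val + 1) - 1, by
        have := hbdd (i.val + 1) (by omega) (by have := i.isLt; omega)
        omega⟩ : Fin (k - 3))) := by
    intro i i' heq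
    rw [Fin.mk.injEq] at heq
    have hb := hbdd (i.val + 1) (by omega) (by have := i.isLt; omega)
    have hb' := hbdd (i'.val + 1) (by omega) (by have := i'.isLt; omega)
    have heq' : G (i.val + 1) = G (i'.val + 1) := by omega
    by_cases hlvl : G (i.val + 1) = j
    · have := UL (i.val + 1) (i'.val + 1) (by omega) (by have := i.isLt; omega)
        (by omega) (by have := i'.isLt; omega) hlvl (by omega)
      exact Fin.ext (by omega)
    · have := C1 (i.val + 1) (i'.val + 1) (by have := i.isLt; omega)
        (by have := i'.isLt; omega) heq' hlvl
      exact Fin.ext (by omega)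
  have := Fintype.card_le_of_injective _ hemb
  simp only [Fintype.card_fin] at this
  omega

/-! ### Labels for the seed -/

/-- rank of a real value among the labels of the pattern edges -/
noncomputable def rnk (k : ℕ) (l : Sym2 (Fin k) → ℝ) (v : ℝ) : ℕ :=
  {e ∈ (pathGraph k).edgeSet | l e < v}.ncard

theorem rnk_lt {l : Sym2 (Fin k) → ℝ} {e e' : Sym2 (Fin k)}
    (he : e ∈ (pathGraph k).edgeSet) (h : l e < l e') :
    rnk k l (l e) < rnk k l (l e') := by
  refine Set.ncard_lt_ncard ?_ (Set.toFinite _)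
  constructor
  · rintro e'' ⟨h1, h2⟩
    exact ⟨h1, h2.trans h⟩
  · intro hsub
    have := hsub ⟨he, h⟩
    exact absurd this.2 (lt_irrefl _)

theorem rnk_iff {l : Sym2 (Fin k) → ℝ} {e e' : Sym2 (Fin k)}
    (he : e ∈ (pathGraph k).edgeSet) (he' : e' ∈ (pathGraph k).edgeSet) :
    l e < l e' ↔ rnk k l (l e) < rnk k l (l e') := by
  constructor
  · exact fun h => rnk_lt he h
  · intro h
    rcases lt_trichotomy (l e) (l e') with h1 | h1 | h1
    · exact h1
    · rw [h1] at h; exact absurd h (lt_irrefl _)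
    · exact absurd (rnk_lt he' h1) (by omega)

/-- the label value associated to an edge joining levels `lo` and `lo+1` -/
noncomputable def eLab (k j : ℕ) (l : Sym2 (Fin k) → ℝ) (lo : ℕ) : ℝ :=
  if h : lo + 1 < k ∧ lo < j then l s((⟨lo, by omega⟩ : Fin k), (⟨lo + 1, h.1⟩ : Fin k))
  else if h2 : lo + 2 < k then l s((⟨lo + 1, by omega⟩ : Fin k), (⟨lo + 2, h2⟩ : Fin k))
  else 0

theorem elab_stem {j lo : ℕ} (l : Sym2 (Fin k) → ℝ) (hj : j + 1 < k) (h : lo < j) :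
    eLab k j l lo = l s((⟨lo, by omega⟩ : Fin k), (⟨lo + 1, by omega⟩ : Fin k)) := by
  rw [eLab, dif_pos ⟨by omega, h⟩]

theorem elab_chain {j lo : ℕ} (l : Sym2 (Fin k) → ℝ) (h : j ≤ lo) (h2 : lo + 2 < k) :
    eLab k j l lo = l s((⟨lo + 1, by omega⟩ : Fin k), (⟨lo + 2, h2⟩ : Fin k)) := by
  rw [eLab, dif_neg (by omega), dif_pos h2]

/-- the lower level of an edge -/
def loOf (n k j : ℕ) : Sym2 (Fin n) → ℕ :=
  Sym2.lift ⟨fun x y => min (lev n k j x) (lev n k j y), fun x y => by dsimp only; rw [min_comm]⟩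

def sumOf (n : ℕ) : Sym2 (Fin n) → ℕ :=
  Sym2.lift ⟨fun x y => x.val + y.val, fun x y => by dsimp only; omega⟩

/-- the labels of the seed graph -/
noncomputable def seedLab (n k j : ℕ) (l : Sym2 (Fin k) → ℝ) : Sym2 (Fin n) → ℝ :=
  fun e => ((rnk k l (eLab k j l (loOf n k j e)) * (2 * n + 2) + sumOf n e : ℕ) : ℝ)

theorem loOf_mk {j : ℕ} (x y : Fin n) : loOf n k j s(x, y) = min (lev n k j x) (lev n k j y) := rfl

theorem sumOf_mk (x y : Fin n) : sumOf n s(x, y) = x.val + y.val := rfl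

theorem key_arith {M a b m m' : ℕ} (hm : m < M) (hm' : m' < M) (hab : a ≠ b) :
    a * M + m < b * M + m' ↔ a < b := by
  constructor
  · intro h
    by_contra hc
    have hba : b < a := by omega
    have h2 : (b + 1) * M ≤ a * M := Nat.mul_le_mul_right M (by omega)
    rw [Nat.succ_mul] at h2
    omega
  · intro h
    have h2 : (a + 1) * M ≤ b * M := Nat.mul_le_mul_right M (by omega)
    rw [Nat.succ_mul] at h2
    omega

theorem eq_arith {M a b m m' : ℕ} (hm : m < M) (hm' : m' < M)
    (h : a * M + m = b * M + m') : a = b ∧ m = m' := by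
  have hab : a = b := by
    rcases lt_trichotomy a b with h1 | h1 | h1
    · have h2 : (a + 1) * M ≤ b * M := Nat.mul_le_mul_right M (by omega)
      rw [Nat.succ_mul] at h2
      omega
    · exact h1
    · have h2 : (b + 1) * M ≤ a * M := Nat.mul_le_mul_right M (by omega)
      rw [Nat.succ_mul] at h2
      omega
  subst hab
  omega

theorem seed_edge_rep {j : ℕ} {e : Sym2 (Fin n)} (he : e ∈ (seed n k j).edgeSet) :
    ∃ x y : Fin n, e = s(x, y) ∧ lev n k j x + 1 = lev n k j y := by
  induction e with
  | _ a b =>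
    have h := (seed n k j).mem_edgeSet.1 he
    rw [seed_adj] at h
    rcases h.2 with h1 | h1
    · exact ⟨a, b, rfl, h1⟩
    · exact ⟨b, a, Sym2.eq_swap, h1⟩

def pIdx (j lo : ℕ) : ℕ := if lo < j then lo else lo + 1

theorem pIdx_le {j lo : ℕ} : pIdx j lo ≤ lo + 1 := by unfold pIdx; split_ifs <;> omega

theorem pIdx_inj {j lo lo' : ℕ} (h : pIdx j lo = pIdx j lo') : lo = lo' := by
  unfold pIdx at h; split_ifs at h <;> omega

theorem mem_path_edge {a : ℕ} (h : a + 1 < k) :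
    s((⟨a, by omega⟩ : Fin k), (⟨a + 1, h⟩ : Fin k)) ∈ (pathGraph k).edgeSet :=
  (pathGraph k).mem_edgeSet.2 (pathGraph_adj.2 (Or.inl rfl))

theorem eLab_eq {j lo : ℕ} (l : Sym2 (Fin k) → ℝ) (hj : j + 1 < k) (hlo : lo + 3 ≤ k) :
    ∃ (a : ℕ) (h1 : a + 1 < k), a = pIdx j lo ∧
      eLab k j l lo = l s((⟨a, by omega⟩ : Fin k), (⟨a + 1, h1⟩ : Fin k)) := by
  by_cases h : lo < j
  · exact ⟨lo, by omega, (if_pos h).symm, elab_stem l hj h⟩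
  · exact ⟨lo + 1, by omega, (if_neg h).symm, elab_chain l (by omega) (by omega)⟩

theorem sum_lt {x y : Fin n} : x.val + y.val < 2 * n + 2 := by
  have := x.isLt; have := y.isLt; omega

theorem seedLab_injOn {j : ℕ} (l : Sym2 (Fin k) → ℝ) (hk : 4 ≤ k) (hj : j + 1 < k)
    (hlinj : Set.InjOn l (pathGraph k).edgeSet) :
    Set.InjOn (seedLab n k j l) (seed n k j).edgeSet := by
  intro e₁ h₁ e₂ h₂ heq
  obtain ⟨x₁, y₁, rfl, hl₁⟩ := seed_edge_rep h₁
  obtain ⟨x₂, y₂, rfl, hl₂⟩ := seed_edge_rep h₂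
  have hb₁ : lev n k j y₁ ≤ k - 2 := lev_le hj _
  have hb₂ : lev n k j y₂ ≤ k - 2 := lev_le hj _
  have hlo₁ : loOf n k j s(x₁, y₁) = lev n k j x₁ := by
    rw [loOf_mk]; exact min_eq_left (by omega)
  have hlo₂ : loOf n k j s(x₂, y₂) = lev n k j x₂ := by
    rw [loOf_mk]; exact min_eq_left (by omega)
  unfold seedLab at heq
  rw [hlo₁, hlo₂] at heq
  have heqN := Nat.cast_inj.mp heq
  have harith := eq_arith (M := 2 * n + 2)
    (by rw [sumOf_mk]; exact sum_lt) (by rw [sumOf_mk]; exact sum_lt) heqN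
  set lo₁ := lev n k j x₁ with hdef₁
  set lo₂ := lev n k j x₂ with hdef₂
  obtain ⟨a₁, ha₁, hpa₁, hv₁⟩ := eLab_eq (lo := lo₁) l hj (by omega)
  obtain ⟨a₂, ha₂, hpa₂, hv₂⟩ := eLab_eq (lo := lo₂) l hj (by omega)
  have hveq : eLab k j l lo₁ = eLab k j l lo₂ := by
    by_contra hne
    rcases lt_or_gt_of_ne hne with h | h
    · rw [hv₁, hv₂] at h
      exact absurd ((rnk_iff (mem_path_edge ha₁) (mem_path_edge ha₂)).1 h)
        (by rw [← hv₁, ← hv₂]; omega)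
    · rw [hv₁, hv₂] at h
      exact absurd ((rnk_iff (mem_path_edge ha₂) (mem_path_edge ha₁)).1 h)
        (by rw [← hv₁, ← hv₂]; omega)
  have hpeq : a₁ = a₂ := by
    rw [hv₁, hv₂] at hveq
    have := hlinj (mem_path_edge ha₁) (mem_path_edge ha₂) hveq
    rw [Sym2.eq_iff] at this
    rcases this with ⟨ha, _⟩ | ⟨ha, hb⟩
    · rw [Fin.mk.injEq] at ha; exact ha
    · rw [Fin.mk.injEq] at ha hb; omega
  have hloeq : lo₁ = lo₂ := pIdx_inj (by rw [← hpa₁, ← hpa₂, hpeq])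
  have hsum : x₁.val + y₁.val = x₂.val + y₂.val := by
    rw [sumOf_mk, sumOf_mk] at harith; exact harith.2
  have hy : lev n k j y₁ = lev n k j y₂ := by omega
  by_cases hc1 : lo₁ = j
  · have hyy : y₁ = y₂ := core_inj hj (by omega) (by omega) hy
    have hxx : x₁ = x₂ := Fin.ext (by rw [hyy] at hsum; omega)
    rw [hxx, hyy]
  · by_cases hc2 : lo₁ + 1 = j
    · have hxx : x₁ = x₂ := core_inj hj (by omega) (by omega) (by omega)
      have hyy : y₁ = y₂ := Fin.ext (by rw [hxx] at hsum; omega)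
      rw [hxx, hyy]
    · have hxx : x₁ = x₂ := core_inj hj (by omega) (by omega) (by omega)
      have hyy : y₁ = y₂ := core_inj hj (by omega) (by omega) hy
      rw [hxx, hyy]

theorem path_edge_rep' {e : Sym2 (Fin k)} (he : e ∈ (pathGraph k).edgeSet) :
    ∃ a b : Fin k, e = s(a, b) ∧ a.val + 1 = b.val := by
  induction e with
  | _ x y =>
    have hadj := (pathGraph k).mem_edgeSet.1 he
    rw [pathGraph_adj] at hadj
    rcases hadj with h | h
    · exact ⟨x, y, rfl, h⟩
    · exact ⟨y, x, Sym2.eq_swap, h⟩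

theorem pedge_ne' {a b a' b' : Fin k} (hab : a.val + 1 = b.val) (hab' : a'.val + 1 = b'.val)
    (hne : a.val ≠ a'.val) : s(a, b) ≠ s(a', b') := by
  intro h
  rw [Sym2.eq_iff] at h
  rcases h with ⟨h1, h2⟩ | ⟨h1, h2⟩ <;>
    [skip; skip] <;>
    · have e1 := congrArg Fin.val h1
      have e2 := congrArg Fin.val h2
      omega

theorem mem_path_edge' {a b : Fin k} (h : a.val + 1 = b.val) :
    s(a, b) ∈ (pathGraph k).edgeSet :=
  (pathGraph k).mem_edgeSet.2 (pathGraph_adj.2 (Or.inl h))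

theorem lev_mk {j m : ℕ} (hm : m < n) :
    lev n k j ⟨m, hm⟩ = if m < j then m else if m < k - 2 then m + 1 else j := rfl

theorem lev_leaf {j : ℕ} (hj : j + 1 < k) {x : Fin n} (hx : k - 2 ≤ x.val) :
    lev n k j x = j := (lev_eq_j_iff hj x).2 hx

theorem seed_creates {j : ℕ} (l : Sym2 (Fin k) → ℝ) (hk : 4 ≤ k) (hj : j + 1 < k)
    (hlinj : Set.InjOn l (pathGraph k).edgeSet)
    (hmin : ∀ e ∈ (pathGraph k).edgeSet,
      e ≠ s((⟨j, by omega⟩ : Fin k), (⟨j + 1, hj⟩ : Fin k)) →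
      l s((⟨j, by omega⟩ : Fin k), (⟨j + 1, hj⟩ : Fin k)) < l e)
    {u v : Fin n} (hu : k - 2 ≤ u.val) (hv : k - 2 ≤ v.val) (huv : u ≠ v) :
    creates (seed n k j) (seedLab n k j l) (pathGraph k) l s(u, v) := by
  intro t ht
  have hn : k - 2 < n := lt_of_le_of_lt hu u.isLt
  have hneval : u.val ≠ v.val := fun h => huv (Fin.ext h)
  set f : Fin k → Fin n := fun i =>
    if h : i.val < j then ⟨i.val, by omega⟩
    else if i.val = j then u
    else if i.val = j + 1 then v
    else ⟨i.val - 2, by have := i.isLt; omega⟩ with hf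
  have hf1 : ∀ i : Fin k, i.val < j → f i = ⟨i.val, by omega⟩ := by
    intro i h; simp only [hf]; rw [dif_pos h]
  have hf2 : ∀ i : Fin k, i.val = j → f i = u := by
    intro i h; simp only [hf]; rw [dif_neg (by omega), if_pos h]
  have hf3 : ∀ i : Fin k, i.val = j + 1 → f i = v := by
    intro i h; simp only [hf]; rw [dif_neg (by omega), if_neg (by omega), if_pos h]
  have hf4 : ∀ i : Fin k, j + 1 < i.val → f i = ⟨i.val - 2, by have := i.isLt; omega⟩ := by
    intro i h; simp only [hf]
    rw [dif_neg (by omega), if_neg (by omega), if_neg (by omega)]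
  have hlev : ∀ i : Fin k,
      lev n k j (f i) = if i.val < j then i.val else if i.val ≤ j + 1 then j else i.val - 1 := by
    intro i
    by_cases h1 : i.val < j
    · rw [hf1 i h1, if_pos h1, lev_mk, if_pos h1]
    · rw [if_neg h1]
      by_cases h2 : i.val = j
      · rw [hf2 i h2, if_pos (by omega), lev_leaf hj hu]
      · by_cases h3 : i.val = j + 1
        · rw [hf3 i h3, if_pos (by omega), lev_leaf hj hv]
        · rw [hf4 i (by omega), if_neg (by omega), lev_mk, if_neg (by omega),
            if_pos (by have := i.isLt; omega)]
          omega
  have hvale : ∀ i : Fin k, (f i).val =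
      if i.val < j then i.val else if i.val = j then u.val else if i.val = j + 1 then v.val
      else i.val - 2 := by
    intro i
    by_cases h1 : i.val < j
    · rw [hf1 i h1, if_pos h1]
    · rw [if_neg h1]
      by_cases h2 : i.val = j
      · rw [hf2 i h2, if_pos h2]
      · rw [if_neg h2]
        by_cases h3 : i.val = j + 1
        · rw [hf3 i h3, if_pos h3]
        · rw [hf4 i (by omega), if_neg h3]
  have hfinj : Function.Injective f := by
    intro i i' heq
    have h1 := congrArg Fin.val heq
    rw [hvale i, hvale i'] at h1
    have hb1 := i.isLt
    have hb2 := i'.isLt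
    refine Fin.ext ?_
    split_ifs at h1 <;> omega
  have hadjseed : ∀ a b : Fin k, a.val + 1 = b.val → a.val ≠ j →
      (seed n k j).Adj (f a) (f b) := by
    intro a b hab hne
    refine seed_adj.2 ⟨fun h => by have := congrArg Fin.val (hfinj h); omega, Or.inl ?_⟩
    rw [hlev a, hlev b]
    have := b.isLt
    split_ifs <;> omega
  have hadjf : ∀ a b : Fin k, (pathGraph k).Adj a b →
      (seed n k j ⊔ fromEdgeSet {s(u, v)}).Adj (f a) (f b) := by
    have hs : ∀ a b : Fin k, a.val + 1 = b.val →
        (seed n k j ⊔ fromEdgeSet {s(u, v)}).Adj (f a) (f b) := by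
      intro a b hab
      by_cases hc : a.val = j
      · rw [hf2 a hc, hf3 b (by omega)]
        exact (sup_adj _ _ _ _).2 (Or.inr ((fromEdgeSet_adj _).2 ⟨rfl, huv⟩))
      · exact (sup_adj _ _ _ _).2 (Or.inl (hadjseed a b hab hc))
    intro a b hab
    rw [pathGraph_adj] at hab
    rcases hab with h | h
    · exact hs a b h
    · exact (hs b a h).symm
  have hmapval : ∀ (a b : Fin k), a.val + 1 = b.val → a.val ≠ j →
      Sym2.map f s(a, b) ≠ s(u, v) ∧
      Sym2.map f s(a, b) ∈ (seed n k j).edgeSet ∧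
      ∃ m : ℕ, m < 2 * n + 2 ∧
        seedLab n k j l (Sym2.map f s(a, b)) =
          ((rnk k l (l s(a, b)) * (2 * n + 2) + m : ℕ) : ℝ) := by
    intro a b hab hne
    have hbk := b.isLt
    have hmap : Sym2.map f s(a, b) = s(f a, f b) := Sym2.map_pair_eq f a b
    have hadj' : (seed n k j).Adj (f a) (f b) := hadjseed a b hab hne
    have hcore : (f a).val < k - 2 ∨ (f b).val < k - 2 := by
      by_cases h1 : a.val < j
      · left
        rw [hf1 a h1]
        show a.val < k - 2
        omega
      · right
        rw [hf4 b (by omega)]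
        show b.val - 2 < k - 2
        omega
    constructor
    · rw [hmap]
      intro hq
      rw [Sym2.eq_iff] at hq
      rcases hq with ⟨h1, h2⟩ | ⟨h1, h2⟩ <;> rcases hcore with h3 | h3 <;>
        [rw [h1] at h3; rw [h2] at h3; rw [h1] at h3; rw [h2] at h3] <;> omega
    constructor
    · rw [hmap]; exact (seed n k j).mem_edgeSet.2 hadj'
    · rw [hmap]
      have hlevs : lev n k j (f a) + 1 = lev n k j (f b) := by
        rw [hlev a, hlev b]
        split_ifs <;> omega
      have hlo : loOf n k j s(f a, f b) = lev n k j (f a) := by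
        rw [loOf_mk]; exact min_eq_left (by omega)
      have hloval : lev n k j (f a) = if a.val < j then a.val else a.val - 1 := by
        rw [hlev a]
        split_ifs <;> omega
      have hlob : lev n k j (f a) + 3 ≤ k := by
        rw [hloval]; split_ifs <;> omega
      obtain ⟨c, hc1, hc2, hc3⟩ := eLab_eq (lo := lev n k j (f a)) l hj hlob
      have hcval : c = a.val := by
        rw [hc2]
        unfold pIdx
        rw [hloval]
        split_ifs <;> omega
      have hceq : s((⟨c, by omega⟩ : Fin k), (⟨c + 1, hc1⟩ : Fin k)) = s(a, b) := by
        rw [Sym2.eq_iff]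
        left
        exact ⟨Fin.ext hcval, Fin.ext (by show c + 1 = b.val; omega)⟩
      refine ⟨sumOf n s(f a, f b), by rw [sumOf_mk]; exact sum_lt, ?_⟩
      unfold seedLab
      rw [hlo, hc3, hceq]
  refine ⟨f, hfinj, hadjf, ?_⟩
  intro e₁ he₁ e₂ he₂
  obtain ⟨a₁, b₁, rfl, hab₁⟩ := path_edge_rep' he₁
  obtain ⟨a₂, b₂, rfl, hab₂⟩ := path_edge_rep' he₂
  have hb1k := b₁.isLt
  have hb2k := b₂.isLt
  by_cases hi₁ : a₁.val = j <;> by_cases hi₂ : a₂.val = j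
  · -- both are the minimal edge
    have hE : s(a₁, b₁) = s(a₂, b₂) := by
      rw [Sym2.eq_iff]; left
      exact ⟨Fin.ext (by omega), Fin.ext (by omega)⟩
    rw [hE]
    exact iff_of_false (lt_irrefl _) (lt_irrefl _)
  · -- e₁ is minimal, e₂ is not
    obtain ⟨hnuv, hmem, m, hm, hvalm⟩ := hmapval a₂ b₂ hab₂ hi₂
    have hm1 : Sym2.map f s(a₁, b₁) = s(u, v) := by
      rw [Sym2.map_pair_eq, hf2 a₁ hi₁, hf3 b₁ (by omega)]
    beta_reduce
    rw [hm1, if_pos rfl, if_neg hnuv]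
    refine iff_of_true ?_ (ht _ hmem)
    have hE : s(a₁, b₁) = s((⟨j, by omega⟩ : Fin k), (⟨j + 1, hj⟩ : Fin k)) := by
      rw [Sym2.eq_iff]; left
      exact ⟨Fin.ext (show a₁.val = j from hi₁), Fin.ext (show b₁.val = j + 1 by omega)⟩
    rw [hE]
    exact hmin _ (mem_path_edge' hab₂) (pedge_ne' hab₂ rfl (show a₂.val ≠ j by omega))
  · -- e₂ is minimal, e₁ is not
    obtain ⟨hnuv, hmem, m, hm, hvalm⟩ := hmapval a₁ b₁ hab₁ hi₁
    have hm2 : Sym2.map f s(a₂, b₂) = s(u, v) := by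
      rw [Sym2.map_pair_eq, hf2 a₂ hi₂, hf3 b₂ (by omega)]
    beta_reduce
    rw [hm2, if_pos rfl, if_neg hnuv]
    have hE : s(a₂, b₂) = s((⟨j, by omega⟩ : Fin k), (⟨j + 1, hj⟩ : Fin k)) := by
      rw [Sym2.eq_iff]; left
      exact ⟨Fin.ext (show a₂.val = j from hi₂), Fin.ext (show b₂.val = j + 1 by omega)⟩
    rw [hE]
    refine iff_of_false ?_ ?_
    · exact not_lt.2 (le_of_lt
        (hmin _ (mem_path_edge' hab₁) (pedge_ne' hab₁ rfl (show a₁.val ≠ j by omega))))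
    · exact not_lt.2 (le_of_lt (ht _ hmem))
  · -- neither is minimal
    by_cases heq : a₁.val = a₂.val
    · have hE : s(a₁, b₁) = s(a₂, b₂) := by
        rw [Sym2.eq_iff]; left
        exact ⟨Fin.ext heq, Fin.ext (by omega)⟩
      rw [hE]
      exact iff_of_false (lt_irrefl _) (lt_irrefl _)
    · obtain ⟨hnuv₁, hmem₁, m₁, hm₁, hvalm₁⟩ := hmapval a₁ b₁ hab₁ hi₁
      obtain ⟨hnuv₂, hmem₂, m₂, hm₂, hvalm₂⟩ := hmapval a₂ b₂ hab₂ hi₂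
      beta_reduce
      rw [if_neg hnuv₁, if_neg hnuv₂, hvalm₁, hvalm₂]
      have hvne : l s(a₁, b₁) ≠ l s(a₂, b₂) := fun hq =>
        pedge_ne' hab₁ hab₂ heq (hlinj (mem_path_edge' hab₁) (mem_path_edge' hab₂) hq)
      have hrne : rnk k l (l s(a₁, b₁)) ≠ rnk k l (l s(a₂, b₂)) := by
        intro hq
        rcases lt_trichotomy (l s(a₁, b₁)) (l s(a₂, b₂)) with hlt | hq2 | hlt
        · have := rnk_lt (mem_path_edge' hab₁) hlt; omega
        · exact hvne hq2
        · have := rnk_lt (mem_path_edge' hab₂) hlt; omega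
      rw [Nat.cast_lt, key_arith hm₁ hm₂ hrne]
      exact rnk_iff (mem_path_edge' hab₁) (mem_path_edge' hab₂)

/-! ### Counting -/

def minV (n : ℕ) : Sym2 (Fin n) → ℕ :=
  Sym2.lift ⟨fun x y => min x.val y.val, fun x y => by dsimp only; rw [min_comm]⟩

def maxV (n : ℕ) : Sym2 (Fin n) → ℕ :=
  Sym2.lift ⟨fun x y => max x.val y.val, fun x y => by dsimp only; rw [max_comm]⟩

theorem minV_mk (x y : Fin n) : minV n s(x, y) = min x.val y.val := rfl
theorem maxV_mk (x y : Fin n) : maxV n s(x, y) = max x.val y.val := rfl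

theorem ncard_le_of_lower {S : Set (Sym2 (Fin n))} {c : ℕ}
    (h : ∀ e ∈ S, ∃ x y : Fin n, e = s(x, y) ∧ x.val < c) : S.ncard ≤ c * n := by
  classical
  rw [Set.ncard_eq_toFinset_card S (Set.toFinite S)]
  have hcard : (Finset.range c ×ˢ Finset.range n).card = c * n := by
    rw [Finset.card_product, Finset.card_range, Finset.card_range]
  rw [← hcard]
  refine Finset.card_le_card_of_injOn (fun e => (minV n e, maxV n e)) ?_ ?_
  · intro e he
    rw [Finset.mem_coe, Set.Finite.mem_toFinset] at he
    obtain ⟨x, y, rfl, hx⟩ := h e he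
    rw [Finset.mem_coe, Finset.mem_product, Finset.mem_range, Finset.mem_range]
    simp only [minV_mk, maxV_mk]
    constructor
    · exact lt_of_le_of_lt (min_le_left _ _) hx
    · exact max_lt x.isLt y.isLt
  · intro e he e' he' heq
    simp only [Finset.mem_coe, Set.Finite.mem_toFinset] at he he'
    obtain ⟨x, y, rfl, _⟩ := h e he
    obtain ⟨x', y', rfl, _⟩ := h e' he'
    simp only [Prod.mk.injEq, minV_mk, maxV_mk] at heq
    rw [Sym2.eq_iff]
    rcases le_total x.val y.val with hc | hc <;> rcases le_total x'.val y'.val with hc' | hc'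
    · left; exact ⟨Fin.ext (by omega), Fin.ext (by omega)⟩
    · right; exact ⟨Fin.ext (by omega), Fin.ext (by omega)⟩
    · right; exact ⟨Fin.ext (by omega), Fin.ext (by omega)⟩
    · left; exact ⟨Fin.ext (by omega), Fin.ext (by omega)⟩

theorem seed_edges_lower {j : ℕ} (hj : j + 1 < k) :
    ∀ e ∈ (seed n k j).edgeSet, ∃ x y : Fin n, e = s(x, y) ∧ x.val < k - 2 := by
  intro e he
  obtain ⟨x, y, rfl, hl⟩ := seed_edge_rep he
  by_cases hx : x.val < k - 2
  · exact ⟨x, y, rfl, hx⟩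
  · refine ⟨y, x, Sym2.eq_swap.symm, ?_⟩
    by_contra hy
    have h1 : lev n k j x = j := lev_leaf hj (by omega)
    have h2 : lev n k j y = j := lev_leaf hj (by omega)
    omega

theorem seed_not_contains {j : ℕ} (l : Sym2 (Fin k) → ℝ) (hk : 4 ≤ k) (hj : j + 1 < k)
    (hj1 : j ≠ 1) (hj3 : j ≠ k - 3) :
    ¬ EOContains (seed n k j) (seedLab n k j l) (pathGraph k) l := by
  rintro ⟨f, hinj, hadj, _⟩
  exact seed_avoid hk hj hj1 hj3 f hinj hadj

theorem seed_Bset_lower {j : ℕ} (l : Sym2 (Fin k) → ℝ) (hk : 4 ≤ k) (hj : j + 1 < k)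
    (hlinj : Set.InjOn l (pathGraph k).edgeSet)
    (hmin : ∀ e ∈ (pathGraph k).edgeSet,
      e ≠ s((⟨j, by omega⟩ : Fin k), (⟨j + 1, hj⟩ : Fin k)) →
      l s((⟨j, by omega⟩ : Fin k), (⟨j + 1, hj⟩ : Fin k)) < l e) :
    ∀ e ∈ Bset (seed n k j) (seedLab n k j l) (pathGraph k) l,
      ∃ x y : Fin n, e = s(x, y) ∧ x.val < k - 2 := by
  rintro e ⟨heC, hecr⟩
  induction e with
  | _ x y =>
    have hxy := notAdj_of_compl_edge heC
    by_cases hx : x.val < k - 2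
    · exact ⟨x, y, rfl, hx⟩
    · by_cases hy : y.val < k - 2
      · exact ⟨y, x, Sym2.eq_swap.symm, hy⟩
      · exfalso
        exact hecr (seed_creates l hk hj hlinj hmin (by omega) (by omega) hxy.1)

/-- The final upper bound for a single `n`. -/
theorem upper_single {j : ℕ} (l : Sym2 (Fin k) → ℝ) (hk : 4 ≤ k) (hj : j + 1 < k)
    (hj1 : j ≠ 1) (hj3 : j ≠ k - 3)
    (hlinj : Set.InjOn l (pathGraph k).edgeSet)
    (hmin : ∀ e ∈ (pathGraph k).edgeSet,
      e ≠ s((⟨j, by omega⟩ : Fin k), (⟨j + 1, hj⟩ : Fin k)) →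
      l s((⟨j, by omega⟩ : Fin k), (⟨j + 1, hj⟩ : Fin k)) < l e) (n : ℕ) :
    satM (pathGraph k) l n ≤ 2 * ((k - 2) * n) ∧
      ∃ m, m ∈ {m | ∃ (H : SimpleGraph (Fin n)) (lH : Sym2 (Fin n) → ℝ),
        Set.InjOn lH H.edgeSet ∧ SatMSat H lH (pathGraph k) l ∧ H.edgeSet.ncard = m} := by
  obtain ⟨H', lH', h1, h2, h3⟩ := greedy (pathGraph k) l ((k - 2) * n) (seed n k j)
    (seedLab n k j l) (seedLab_injOn l hk hj hlinj) (seed_not_contains l hk hj hj1 hj3)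
    (ncard_le_of_lower (seed_Bset_lower l hk hj hlinj hmin))
  have hmem : H'.edgeSet.ncard ∈ {m | ∃ (H : SimpleGraph (Fin n)) (lH : Sym2 (Fin n) → ℝ),
      Set.InjOn lH H.edgeSet ∧ SatMSat H lH (pathGraph k) l ∧ H.edgeSet.ncard = m} :=
    ⟨H', lH', h1, h2, rfl⟩
  constructor
  · refine le_trans (Nat.sInf_le hmem) (le_trans h3 ?_)
    have := ncard_le_of_lower (seed_edges_lower (n := n) hj)
    omega
  · exact ⟨_, hmem⟩

end Stmt14

/-- for an edge-ordered path `P_k` on vertices `u₁, …, u_k` (`k ≥ 4`)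
whose minimal edge is neither `u₂u₃` nor `u_{k-2}u_{k-1}`, `sat_m(n, P_k) = Θ(n)`.
Here the path graph is on `Fin k`, with `uᵢ` the vertex `i - 1`. -/
theorem stmt14 (k : ℕ) (hk : 4 ≤ k) (l : Sym2 (Fin k) → ℝ)
    (hinj : Set.InjOn l (SimpleGraph.pathGraph k).edgeSet)
    (e₀ : Sym2 (Fin k)) (he₀ : e₀ ∈ (SimpleGraph.pathGraph k).edgeSet)
    (hmin : ∀ e ∈ (SimpleGraph.pathGraph k).edgeSet, e ≠ e₀ → l e₀ < l e)
    (h23 : e₀ ≠ s((⟨1, by omega⟩ : Fin k), (⟨2, by omega⟩ : Fin k)))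
    (hk21 : e₀ ≠ s((⟨k - 3, by omega⟩ : Fin k), (⟨k - 2, by omega⟩ : Fin k))) :
    (∃ c : ℝ, 0 < c ∧ ∃ N : ℕ, ∀ n ≥ N,
        c * n ≤ (satM (SimpleGraph.pathGraph k) l n : ℝ)) ∧
    (∃ C : ℝ, ∀ n : ℕ, (satM (SimpleGraph.pathGraph k) l n : ℝ) ≤ C * n) := by
  classical
  obtain ⟨j, h1, hrep⟩ := Stmt14.path_edge_rep he₀
  have hj1 : j ≠ 1 := by
    rintro rfl
    exact h23 hrep
  have hj3 : j ≠ k - 3 := by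
    rintro rfl
    refine hk21 (hrep.trans ?_)
    rw [Sym2.eq_iff]
    left
    exact ⟨rfl, Fin.ext (show k - 3 + 1 = k - 2 by omega)⟩
  rw [hrep] at hmin
  have hups := fun n => Stmt14.upper_single l hk h1 hj1 hj3 hinj hmin n
  constructor
  · -- lower bound
    refine ⟨1/4, by norm_num, 2, fun n hn => ?_⟩
    obtain ⟨-, hne⟩ := hups n
    have hmem := Nat.sInf_mem hne
    obtain ⟨H, lH, hinjH, hsat, hcard⟩ := hmem
    have hiso := Stmt14.no_two_isolated hk rfl hsat
    have hcount := Stmt14.count_from_isolated hiso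
    have hcard' : H.edgeSet.ncard = satM (SimpleGraph.pathGraph k) l n := hcard
    set m := satM (SimpleGraph.pathGraph k) l n with hm
    rw [hcard'] at hcount
    have hm1 : 1 ≤ m := by omega
    have h4 : n ≤ 4 * m := by omega
    have h4' : (n : ℝ) ≤ 4 * (m : ℝ) := by exact_mod_cast h4
    linarith
  · -- upper bound
    refine ⟨2 * k, fun n => ?_⟩
    obtain ⟨hub, -⟩ := hups n
    have h2 : satM (SimpleGraph.pathGraph k) l n ≤ 2 * k * n :=
      le_trans hub (by
        rw [Nat.mul_assoc]
        exact Nat.mul_le_mul_left 2 (Nat.mul_le_mul_right n (by omega)))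
    calc (satM (SimpleGraph.pathGraph k) l n : ℝ) ≤ ((2 * k * n : ℕ) : ℝ) := by
          exact_mod_cast h2
      _ = 2 * k * n := by push_cast; ring
      _ = (2 * k) * n := by ring
end
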